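/- arXiv:1907.12982 — 6 statements merged into one kernel-verified Lean document; each statement's English description precedes it below -/
import Mathlib

section
/- Let φ:(0,∞)→[0,∞) be a non-increasing function and q>1. Then ∫₀^∞ q t^{q-1} φ(t) dt ≤ (∫₀^∞ φ(t)^{1/q} dt)^q. -/
open MeasureTheory Set Filter Function intervalIntegral
open scoped ENNReal Topology

lemma lintK (p : ℝ) (hp : 0 < p) (c : ℝ) (hc : 0 ≤ c) :
    ∫⁻ l in Ioo (0:ℝ) c, ENNReal.ofReal (p * l ^ (p-1)) = ENNReal.ofReal (c ^ p) := by
  have hint : IntegrableOn (fun l : ℝ => p * l ^ (p-1)) (Ioo 0 c) := by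
    have h1 := (intervalIntegral.intervalIntegrable_rpow' (r := p-1) (by linarith) (a := 0) (b := c))
    rw [intervalIntegrable_iff, uIoc_of_le hc] at h1
    exact ((h1.mono_set Ioo_subset_Ioc_self).const_mul p)
  rw [← ofReal_integral_eq_lintegral_ofReal hint]
  · congr 1
    rw [← integral_Ioc_eq_integral_Ioo, ← intervalIntegral.integral_of_le hc]
    rw [intervalIntegral.integral_const_mul]; rw [integral_rpow (Or.inl (by linarith))]
    rw [sub_add_cancel]
    rw [Real.zero_rpow (by linarith), sub_zero]
    field_simp
  · filter_upwards [ae_restrict_mem measurableSet_Ioo] with l hl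
    exact mul_nonneg hp.le (Real.rpow_nonneg hl.1.le _)

lemma lintC (p : ℝ) (hp : 0 < p) (x : ℝ≥0∞) (hx : x ≠ ⊤) :
    x ^ p = ∫⁻ l in Ioi (0:ℝ), ENNReal.ofReal (p * l ^ (p-1)) * (Ioo (0:ℝ) x.toReal).indicator 1 l := by
  have : ∀ l : ℝ, ENNReal.ofReal (p * l ^ (p-1)) * (Ioo (0:ℝ) x.toReal).indicator 1 l
      = (Ioo (0:ℝ) x.toReal).indicator (fun l => ENNReal.ofReal (p * l ^ (p-1))) l := by
    intro l
    by_cases h : l ∈ Ioo (0:ℝ) x.toReal <;>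
      simp [Set.indicator_of_mem, Set.indicator_of_notMem, h]
  rw [lintegral_congr this, lintegral_indicator measurableSet_Ioo,
    Measure.restrict_restrict measurableSet_Ioo]
  have : Ioo (0:ℝ) x.toReal ∩ Ioi 0 = Ioo 0 x.toReal := by
    rw [inter_eq_left]; exact Ioo_subset_Ioi_self
  rw [this, lintK p hp _ ENNReal.toReal_nonneg, ← ENNReal.ofReal_rpow_of_nonneg ENNReal.toReal_nonneg hp.le,
    ENNReal.ofReal_toReal hx]

lemma tailD (f : ℝ → ENNReal)
    (hM : (∫⁻ t in Ioi (0:ℝ), f t) ≠ ⊤) (c : ENNReal) :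
    ∫⁻ t in {t : ℝ | c < ∫⁻ s in Ioc (0:ℝ) t, f s} ∩ Ioi 0, f t
      ≤ (∫⁻ t in Ioi (0:ℝ), f t) - c := by
  set M := ∫⁻ t in Ioi (0:ℝ), f t with hMdef
  set F : ℝ → ENNReal := fun t => ∫⁻ s in Ioc (0:ℝ) t, f s with hFdef
  have hFmono : Monotone F := fun a b hab => lintegral_mono_set (Ioc_subset_Ioc_right hab)
  have hFle : ∀ t, F t ≤ M := fun t => lintegral_mono_set Ioc_subset_Ioi_self
  set S := {t : ℝ | c < F t} ∩ Ioi 0 with hSdef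
  rcases S.eq_empty_or_nonempty with hS | hS
  · rw [hS]; simp
  have hbdd : BddBelow S := ⟨0, fun x hx => le_of_lt hx.2⟩
  set τ := sInf S with hτdef
  have hτ0 : 0 ≤ τ := le_csInf hS fun x hx => hx.2.le
  have hsplit : ∀ u : ℝ, τ ≤ u → F u = F τ + ∫⁻ s in Ioc τ u, f s := by
    intro u hu
    rw [hFdef]
    simp only
    rw [← Ioc_union_Ioc_eq_Ioc hτ0 hu, lintegral_union measurableSet_Ioc (Ioc_disjoint_Ioc_of_le le_rfl)]
  have key : c ≤ F τ := by
    have h1 : ∀ n : ℕ, c ≤ F (τ + 1/(n+1)) := by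
      intro n
      obtain ⟨t, htS, htlt⟩ := exists_lt_of_csInf_lt hS
        (lt_add_of_pos_right _ (by positivity : (0:ℝ) < 1/((n:ℝ)+1)))
      exact (le_of_lt htS.1).trans (hFmono htlt.le)
    have h2 : Tendsto (fun n : ℕ => F (τ + 1/(n+1))) atTop (𝓝 (F τ)) := by
      have heq : (fun n : ℕ => F (τ + 1/(n+1)))
          = fun n : ℕ => F τ + (volume.withDensity f) (Ioc τ (τ + 1/(n+1))) := by
        funext n
        rw [hsplit (τ + 1/(n+1)) (le_add_of_nonneg_right (by positivity)),
          withDensity_apply _ measurableSet_Ioc]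
      rw [heq]
      have h3 : Tendsto (fun n : ℕ => (volume.withDensity f) (Ioc τ (τ + 1/(n+1)))) atTop (𝓝 0) := by
        have hempty : ⋂ n : ℕ, Ioc τ (τ + 1/((n:ℝ)+1)) = ∅ := by
          ext x
          simp only [mem_iInter, mem_Ioc, mem_empty_iff_false, iff_false, not_forall]
          by_contra hx
          push_neg at hx
          have hxτ : τ < x := (hx 0).1
          obtain ⟨n, hn⟩ := exists_nat_one_div_lt (by linarith : 0 < x - τ)
          exact absurd ((hx n).2) (by push_neg; linarith [hn])
        have h4 := tendsto_measure_iInter_atTop (μ := volume.withDensity f)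
          (s := fun n : ℕ => Ioc τ (τ + 1/(n+1)))
          (fun n => measurableSet_Ioc.nullMeasurableSet)
          (fun a b hab => Ioc_subset_Ioc_right (by
            have : (1:ℝ)/(b+1) ≤ 1/(a+1) := by
              apply one_div_le_one_div_of_le (by positivity)
              exact_mod_cast add_le_add_left (Nat.cast_le.mpr hab) 1
            linarith)) ?_
        · rw [hempty, measure_empty] at h4
          exact h4
        · refine ⟨0, ?_⟩
          rw [withDensity_apply _ measurableSet_Ioc]
          exact ((lintegral_mono_set (fun x hx => lt_of_le_of_lt hτ0 hx.1)).trans_lt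
            hM.lt_top).ne
      simpa using (tendsto_const_nhds.add h3)
    exact ge_of_tendsto' h2 h1
  have hFτtop : F τ ≠ ⊤ := ne_top_of_le_ne_top hM (hFle τ)
  calc ∫⁻ t in S, f t ≤ ∫⁻ t in Ici τ, f t :=
        lintegral_mono_set (fun x hx => csInf_le hbdd hx)
    _ = ∫⁻ t in Ioi τ, f t := by rw [Measure.restrict_congr_set Ioi_ae_eq_Ici]
    _ = M - F τ := by
        have h5 : F τ + ∫⁻ s in Ioi τ, f s = M := by
          rw [hMdef, hFdef]
          simp only
          rw [← Ioc_union_Ioi_eq_Ioi hτ0, lintegral_union measurableSet_Ioi (Ioc_disjoint_Ioi le_rfl)]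
        have h6 : (∫⁻ s in Ioi τ, f s) + F τ = M := by rw [add_comm]; exact h5
        exact ENNReal.eq_sub_of_add_eq hFτtop h6
    _ ≤ M - c := tsub_le_tsub_left key M

lemma lintE (p : ℝ) (hp : 0 < p) (m : ℝ) (hm : 0 ≤ m) :
    ∫⁻ l in Ioi (0:ℝ), ENNReal.ofReal (p * l ^ (p-1)) * (ENNReal.ofReal m - ENNReal.ofReal l)
      = ENNReal.ofReal (m ^ (p+1) / (p+1)) := by
  rcases eq_or_lt_of_le hm with hm0 | hm0
  · rw [← hm0]
    rw [Real.zero_rpow (by positivity), zero_div, ENNReal.ofReal_zero]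
    have h0 : ∀ l ∈ Ioi (0:ℝ), ENNReal.ofReal (p * l ^ (p-1)) * ((0:ENNReal) - ENNReal.ofReal l) = 0 := by
      intro l hl
      simp [zero_tsub]
    rw [setLIntegral_congr_fun_ae measurableSet_Ioi (ae_of_all _ h0), lintegral_zero]
  rw [← Ioc_union_Ioi_eq_Ioi hm, lintegral_union measurableSet_Ioi (Ioc_disjoint_Ioi le_rfl)]
  have hIoi : ∫⁻ l in Ioi m, ENNReal.ofReal (p * l ^ (p-1)) * (ENNReal.ofReal m - ENNReal.ofReal l) = 0 := by
    have h0 : ∀ l ∈ Ioi m, ENNReal.ofReal (p * l ^ (p-1)) * (ENNReal.ofReal m - ENNReal.ofReal l) = 0 := by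
      intro l hl
      rw [tsub_eq_zero_of_le (ENNReal.ofReal_le_ofReal (le_of_lt hl)), mul_zero]
    rw [setLIntegral_congr_fun_ae measurableSet_Ioi (ae_of_all _ h0), lintegral_zero]
  rw [hIoi, add_zero]
  have hcongr : ∀ l ∈ Ioc (0:ℝ) m, ENNReal.ofReal (p * l ^ (p-1)) * (ENNReal.ofReal m - ENNReal.ofReal l)
      = ENNReal.ofReal (p * l ^ (p-1) * (m - l)) := by
    intro l hl
    rw [← ENNReal.ofReal_sub _ hl.1.le,
      ← ENNReal.ofReal_mul (mul_nonneg hp.le (Real.rpow_nonneg hl.1.le _))]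
  rw [setLIntegral_congr_fun_ae measurableSet_Ioc (ae_of_all _ hcongr)]
  have hint1 : IntegrableOn (fun l : ℝ => l ^ (p-1)) (Ioc 0 m) := by
    have h1 := (intervalIntegrable_rpow' (r := p-1) (by linarith) (a := 0) (b := m))
    rwa [intervalIntegrable_iff, uIoc_of_le hm] at h1
  have hint2 : IntegrableOn (fun l : ℝ => l ^ p) (Ioc 0 m) := by
    have h1 := (intervalIntegrable_rpow' (r := p) (by linarith) (a := 0) (b := m))
    rwa [intervalIntegrable_iff, uIoc_of_le hm] at h1
  have heqfun : ∀ l ∈ Ioc (0:ℝ) m, p * m * l ^ (p-1) - p * l ^ p = p * l ^ (p-1) * (m - l) := by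
    intro l hl
    have h2 : l ^ (p-1) * l = l ^ p := by
      rw [← Real.rpow_add_one hl.1.ne' (p-1), sub_add_cancel]
    nlinarith [h2]
  have hsub : IntegrableOn (fun l : ℝ => p * m * l ^ (p-1) - p * l ^ p) (Ioc 0 m) :=
    (hint1.const_mul (p*m)).sub (hint2.const_mul p)
  have hint : IntegrableOn (fun l : ℝ => p * l ^ (p-1) * (m - l)) (Ioc 0 m) :=
    hsub.congr_fun heqfun measurableSet_Ioc
  rw [← ofReal_integral_eq_lintegral_ofReal hint]
  · congr 1
    have heq2 : ∫ l in Ioc (0:ℝ) m, p * l ^ (p-1) * (m - l)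
        = ∫ l in Ioc (0:ℝ) m, (p * m * l ^ (p-1) - p * l ^ p) := by
      refine setIntegral_congr_fun measurableSet_Ioc fun l hl => (heqfun l hl).symm
    rw [heq2, ← intervalIntegral.integral_of_le hm]
    rw [intervalIntegral.integral_sub ((intervalIntegrable_rpow' (by linarith)).const_mul _)
      ((intervalIntegrable_rpow' (by linarith)).const_mul _)]
    rw [intervalIntegral.integral_const_mul, intervalIntegral.integral_const_mul]
    rw [integral_rpow (Or.inl (by linarith : (-1:ℝ) < p - 1)), integral_rpow (Or.inl (by linarith))]
    rw [sub_add_cancel, Real.zero_rpow (by positivity), Real.zero_rpow (by positivity),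
      sub_zero, sub_zero]
    have hmp : m ^ p * m = m ^ (p+1) := by
      rw [Real.rpow_add_one hm0.ne' p]
    field_simp
    linear_combination (1 + p) * hmp
  · filter_upwards [ae_restrict_mem measurableSet_Ioc] with l hl
    simp only [Pi.zero_apply]
    exact mul_nonneg (mul_nonneg hp.le (Real.rpow_nonneg hl.1.le _)) (by linarith [hl.2])

lemma lemB (f : ℝ → ENNReal) (hf : Measurable f) (q : ℝ) (hq : 1 < q) :
    ENNReal.ofReal q * ∫⁻ t in Ioi (0:ℝ), (∫⁻ s in Ioc (0:ℝ) t, f s) ^ (q-1) * f t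
      ≤ (∫⁻ t in Ioi (0:ℝ), f t) ^ q := by
  set M := ∫⁻ t in Ioi (0:ℝ), f t with hMdef
  by_cases hM : M = ⊤
  · rw [hM, ENNReal.top_rpow_of_pos (by linarith)]
    exact le_top
  set p := q - 1 with hpdef
  have hp : 0 < p := by simp [hpdef]; linarith
  set F : ℝ → ENNReal := fun t => ∫⁻ s in Ioc (0:ℝ) t, f s with hFdef
  have hFle : ∀ t, F t ≤ M := fun t => lintegral_mono_set Ioc_subset_Ioi_self
  have hFtop : ∀ t, F t ≠ ⊤ := fun t => ne_top_of_le_ne_top hM (hFle t)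
  have hFmono : Monotone F := fun a b hab => lintegral_mono_set (Ioc_subset_Ioc_right hab)
  have hFmeas : Measurable F := hFmono.measurable
  -- rewrite the inner integral using lintC
  have step1 : ∫⁻ t in Ioi (0:ℝ), F t ^ p * f t
      = ∫⁻ t in Ioi (0:ℝ), ∫⁻ l in Ioi (0:ℝ),
          ENNReal.ofReal (p * l ^ (p-1)) * (Ioo (0:ℝ) (F t).toReal).indicator 1 l * f t := by
    refine lintegral_congr fun t => ?_
    rw [lintC p hp (F t) (hFtop t)]
    rw [← lintegral_mul_const _ ?_]
    · exact (ENNReal.measurable_ofReal.comp (by fun_prop)).mul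
        (measurable_one.indicator measurableSet_Ioo)
  -- swap
  have hswap : ∫⁻ t in Ioi (0:ℝ), ∫⁻ l in Ioi (0:ℝ),
          ENNReal.ofReal (p * l ^ (p-1)) * (Ioo (0:ℝ) (F t).toReal).indicator 1 l * f t
      = ∫⁻ l in Ioi (0:ℝ), ∫⁻ t in Ioi (0:ℝ),
          ENNReal.ofReal (p * l ^ (p-1)) * (Ioo (0:ℝ) (F t).toReal).indicator 1 l * f t := by
    apply lintegral_lintegral_swap
    have hset : MeasurableSet {z : ℝ × ℝ | 0 < z.2 ∧ z.2 < (F z.1).toReal} := by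
      apply MeasurableSet.inter
      · exact measurable_snd measurableSet_Ioi
      · exact measurableSet_lt measurable_snd ((ENNReal.measurable_toReal.comp hFmeas).comp measurable_fst)
    have hind : (fun z : ℝ × ℝ => (Ioo (0:ℝ) (F z.1).toReal).indicator (1 : ℝ → ENNReal) z.2)
        = {z : ℝ × ℝ | 0 < z.2 ∧ z.2 < (F z.1).toReal}.indicator (fun _ => (1:ENNReal)) := by
      funext z
      simp only [indicator, mem_Ioo, mem_setOf_eq, Pi.one_apply]
    apply Measurable.aemeasurable
    apply Measurable.mul
    apply Measurable.mul
    · exact ENNReal.measurable_ofReal.comp (by fun_prop)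
    · show Measurable fun z : ℝ × ℝ => (Ioo (0:ℝ) (F z.1).toReal).indicator (1 : ℝ → ENNReal) z.2
      rw [hind]
      exact measurable_const.indicator hset
    · exact hf.comp measurable_fst
  have step2 : ∀ᵐ l ∂(volume.restrict (Ioi (0:ℝ))),
      (∫⁻ t in Ioi (0:ℝ), ENNReal.ofReal (p * l ^ (p-1)) * (Ioo (0:ℝ) (F t).toReal).indicator 1 l * f t)
        ≤ ENNReal.ofReal (p * l ^ (p-1)) * (M - ENNReal.ofReal l) := by
    filter_upwards [ae_restrict_mem measurableSet_Ioi] with l hl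
    have e1 : ∀ t : ℝ, ENNReal.ofReal (p * l ^ (p-1)) * (Ioo (0:ℝ) (F t).toReal).indicator 1 l * f t
        = ENNReal.ofReal (p * l ^ (p-1)) * ({t' : ℝ | ENNReal.ofReal l < F t'}.indicator f t) := by
      intro t
      rw [mul_assoc]
      congr 1
      simp only [indicator, mem_Ioo, mem_setOf_eq, Pi.one_apply]
      by_cases h : ENNReal.ofReal l < F t
      · rw [if_pos h, if_pos, one_mul]
        exact ⟨hl, (ENNReal.ofReal_lt_iff_lt_toReal hl.le (hFtop t)).mp h⟩
      · rw [if_neg h, if_neg, zero_mul]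
        rintro ⟨-, h2⟩
        exact h ((ENNReal.ofReal_lt_iff_lt_toReal hl.le (hFtop t)).mpr h2)
    rw [lintegral_congr e1, lintegral_const_mul' _ _ ENNReal.ofReal_ne_top]
    apply mul_le_mul_right
    have hS : MeasurableSet {t' : ℝ | ENNReal.ofReal l < F t'} := by
      exact measurableSet_lt measurable_const hFmeas
    rw [lintegral_indicator hS, Measure.restrict_restrict hS]
    exact tailD f hM (ENNReal.ofReal l)
  have step3 : ∫⁻ l in Ioi (0:ℝ), ENNReal.ofReal (p * l ^ (p-1)) * (M - ENNReal.ofReal l)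
      = ENNReal.ofReal (M.toReal ^ q / q) := by
    have : M = ENNReal.ofReal M.toReal := (ENNReal.ofReal_toReal hM).symm
    rw [this]
    simp only [ENNReal.toReal_ofReal ENNReal.toReal_nonneg]
    rw [lintE p hp M.toReal ENNReal.toReal_nonneg]
    rw [hpdef, sub_add_cancel]
  calc ENNReal.ofReal q * ∫⁻ t in Ioi (0:ℝ), F t ^ p * f t
      ≤ ENNReal.ofReal q * ENNReal.ofReal (M.toReal ^ q / q) := by
        apply mul_le_mul_right
        rw [step1, hswap, ← step3]
        exact lintegral_mono_ae step2
    _ = M ^ q := by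
        rw [← ENNReal.ofReal_mul (by linarith), mul_comm q _, div_mul_cancel₀ _ (by linarith : q ≠ 0),
          ← ENNReal.ofReal_rpow_of_nonneg ENNReal.toReal_nonneg (by linarith : (0:ℝ) ≤ q),
          ENNReal.ofReal_toReal hM]

/-- If `φ : (0,∞) → [0,∞]` is non-increasing and `q > 1`, then
`∫₀^∞ q t^{q-1} φ(t) dt ≤ (∫₀^∞ φ(t)^{1/q} dt)^q`. -/
theorem stmt0 (φ : ℝ → ENNReal) (hφ : AntitoneOn φ (Ioi 0)) (q : ℝ) (hq : 1 < q) :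
    ∫⁻ t in Ioi (0 : ℝ), ENNReal.ofReal (q * t ^ (q - 1)) * φ t
      ≤ (∫⁻ t in Ioi (0 : ℝ), φ t ^ (1 / q)) ^ q := by
  have hq0 : (0:ℝ) < q := by linarith
  have h1q : (0:ℝ) < 1/q := by positivity
  have hφae : AEMeasurable φ (volume.restrict (Ioi 0)) :=
    aemeasurable_restrict_of_antitoneOn measurableSet_Ioi hφ
  set g := hφae.mk φ with hgdef
  have hgmeas : Measurable g := hφae.measurable_mk
  have hgae : φ =ᵐ[volume.restrict (Ioi 0)] g := hφae.ae_eq_mk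
  set f : ℝ → ENNReal := fun t => g t ^ (1/q) with hfdef
  have hfmeas : Measurable f := by
    exact ENNReal.continuous_rpow_const.measurable.comp hgmeas
  have hfae : ∀ᵐ t ∂(volume.restrict (Ioi (0:ℝ))), f t = φ t ^ (1/q) := by
    filter_upwards [hgae] with t ht
    rw [hfdef]
    simp only
    rw [ht]
  have hRHS : ∫⁻ t in Ioi (0:ℝ), φ t ^ (1/q) = ∫⁻ t in Ioi (0:ℝ), f t :=
    lintegral_congr_ae (hfae.mono fun t ht => ht.symm)
  have key : ∀ᵐ t ∂(volume.restrict (Ioi (0:ℝ))),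
      ENNReal.ofReal (q * t ^ (q-1)) * φ t
        ≤ ENNReal.ofReal q * ((∫⁻ s in Ioc (0:ℝ) t, f s) ^ (q-1) * f t) := by
    filter_upwards [hfae, ae_restrict_mem measurableSet_Ioi] with t hft ht
    have ht0 : (0:ℝ) < t := ht
    have hFt : ENNReal.ofReal t * φ t ^ (1/q) ≤ ∫⁻ s in Ioc (0:ℝ) t, f s := by
      have h1 : ∀ᵐ s ∂(volume.restrict (Ioc (0:ℝ) t)), f s = φ s ^ (1/q) :=
        ae_restrict_of_ae_restrict_of_subset Ioc_subset_Ioi_self hfae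
      have hae2 : ∀ᵐ s ∂(volume.restrict (Ioc (0:ℝ) t)), φ t ^ (1/q) ≤ f s := by
        filter_upwards [h1, ae_restrict_mem measurableSet_Ioc] with s hs hsmem
        rw [hs]
        exact ENNReal.rpow_le_rpow (hφ hsmem.1 ht hsmem.2) h1q.le
      calc ENNReal.ofReal t * φ t ^ (1/q)
          = ∫⁻ _ in Ioc (0:ℝ) t, φ t ^ (1/q) := by
            rw [setLIntegral_const, Real.volume_Ioc, sub_zero, mul_comm]
        _ ≤ ∫⁻ s in Ioc (0:ℝ) t, f s := lintegral_mono_ae hae2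
    rcases eq_or_ne (φ t) 0 with h0 | h0
    · simp [h0]
    rcases eq_or_ne (φ t) ⊤ with htop | htop
    · have hu : φ t ^ (1/q) = ⊤ := by rw [htop]; exact ENNReal.top_rpow_of_pos h1q
      have hF : ∫⁻ s in Ioc (0:ℝ) t, f s = ⊤ := by
        refine top_le_iff.mp (le_trans ?_ hFt)
        rw [hu, ENNReal.mul_top (by simp [ht0] : ENNReal.ofReal t ≠ 0)]
      rw [hF, hft, hu, ENNReal.top_rpow_of_pos (by linarith), ENNReal.top_mul_top,
        ENNReal.mul_top (by simp [hq0] : ENNReal.ofReal q ≠ 0)]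
      exact le_top
    · have hu0 : φ t ^ (1/q) ≠ 0 := by
        simp [ENNReal.rpow_eq_zero_iff, h0, htop, h1q, not_lt.mpr h1q.le]
      have hut : φ t ^ (1/q) ≠ ⊤ := by
        simp [ENNReal.rpow_eq_top_iff, h0, htop, h1q, not_lt.mpr h1q.le]
      have huq : (φ t ^ (1/q)) ^ (q-1) * (φ t ^ (1/q)) = φ t := by
        have e1 : (φ t ^ (1/q)) ^ (q-1) * (φ t ^ (1/q)) ^ (1:ℝ)
            = (φ t ^ (1/q)) ^ ((q-1) + 1) := (ENNReal.rpow_add _ _ hu0 hut).symm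
        rw [ENNReal.rpow_one] at e1
        rw [e1, sub_add_cancel, ← ENNReal.rpow_mul, one_div_mul_cancel (by linarith : q ≠ 0),
          ENNReal.rpow_one]
      calc ENNReal.ofReal (q * t ^ (q-1)) * φ t
          = ENNReal.ofReal q * ((ENNReal.ofReal t * φ t ^ (1/q)) ^ (q-1) * (φ t ^ (1/q))) := by
            rw [ENNReal.mul_rpow_of_nonneg _ _ (by linarith : (0:ℝ) ≤ q-1),
              mul_assoc ((ENNReal.ofReal t) ^ (q-1)) _ _, huq,
              ENNReal.ofReal_rpow_of_pos ht0, ENNReal.ofReal_mul hq0.le, mul_assoc]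
        _ ≤ ENNReal.ofReal q * ((∫⁻ s in Ioc (0:ℝ) t, f s) ^ (q-1) * (φ t ^ (1/q))) := by
            exact mul_le_mul_right (mul_le_mul_left (ENNReal.rpow_le_rpow hFt (by linarith)) _) _
        _ = ENNReal.ofReal q * ((∫⁻ s in Ioc (0:ℝ) t, f s) ^ (q-1) * f t) := by rw [hft]
  calc ∫⁻ t in Ioi (0 : ℝ), ENNReal.ofReal (q * t ^ (q - 1)) * φ t
      ≤ ∫⁻ t in Ioi (0:ℝ), ENNReal.ofReal q * ((∫⁻ s in Ioc (0:ℝ) t, f s) ^ (q-1) * f t) :=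
        lintegral_mono_ae key
    _ = ENNReal.ofReal q * ∫⁻ t in Ioi (0:ℝ), (∫⁻ s in Ioc (0:ℝ) t, f s) ^ (q-1) * f t :=
        lintegral_const_mul' _ _ ENNReal.ofReal_ne_top
    _ ≤ (∫⁻ t in Ioi (0:ℝ), f t) ^ q := lemB f hfmeas q hq
    _ = (∫⁻ t in Ioi (0 : ℝ), φ t ^ (1 / q)) ^ q := by rw [hRHS]
end

section
/- Let Ω⊂ℝⁿ be a bounded open set, θ>0, h:Ω→[0,∞) integrable, and suppose that for some η ≥ 0 and every y₁ ∈ [η, sup_{z∈Ω} z₁), the reflection z ↦ z* = (2y₁−z₁, z₂,…,zₙ) maps Ω∩{z₁ ≥ y₁} into Ω∩{z₁ ≤ y₁} and satisfies h(z*) ≥ h(z) for all z ∈ Ω∩{z₁ ≥ y₁}. Then the function y₁ ↦ J(y₁) := ∫_Ω h(z)|z − y₁e₁|^{−θ} dz is non-increasing on [η, sup_{z∈Ω} z₁). -/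
open MeasureTheory Set Metric

section refl_aux

variable {n : ℕ}

/-- Reflection of the `i`-th coordinate across `m`. -/
noncomputable def reflMap (i : Fin n) (m : ℝ) (z : EuclideanSpace ℝ (Fin n)) :
    EuclideanSpace ℝ (Fin n) :=
  WithLp.toLp 2 (Function.update z i (2 * m - z i))

lemma reflMap_apply (i : Fin n) (m : ℝ) (z : EuclideanSpace ℝ (Fin n)) (j : Fin n) :
    reflMap i m z j = if j = i then 2 * m - z i else z j :=
  Function.update_apply z i _ j

lemma reflMap_involutive (i : Fin n) (m : ℝ) : Function.Involutive (reflMap i m) := by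
  intro z
  ext j
  simp only [reflMap_apply]
  split_ifs with hj
  · subst hj; simp [reflMap_apply]
  · rfl

lemma norm_sub_smul_single (i : Fin n) (y : ℝ) (z : EuclideanSpace ℝ (Fin n)) :
    ‖z - y • EuclideanSpace.single i (1 : ℝ)‖ =
      Real.sqrt (∑ j, (z j - if j = i then y else 0) ^ 2) := by
  rw [EuclideanSpace.norm_eq]
  congr 1
  refine Finset.sum_congr rfl fun j _ => ?_
  have hj : (z - y • EuclideanSpace.single i (1 : ℝ)) j = z j - if j = i then y else 0 := by
    simp only [PiLp.sub_apply, PiLp.smul_apply, EuclideanSpace.single_apply, smul_eq_mul]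
    split_ifs <;> ring
  rw [hj, Real.norm_eq_abs, sq_abs]

lemma norm_reflMap_sub_single (i : Fin n) (m y : ℝ) (z : EuclideanSpace ℝ (Fin n)) :
    ‖reflMap i m z - y • EuclideanSpace.single i (1 : ℝ)‖ =
      ‖z - (2 * m - y) • EuclideanSpace.single i (1 : ℝ)‖ := by
  rw [norm_sub_smul_single, norm_sub_smul_single]
  congr 1
  refine Finset.sum_congr rfl fun j _ => ?_
  rw [reflMap_apply]
  split_ifs with hj
  · subst hj; ring
  · rfl

lemma norm_sub_single_mono (i : Fin n) (a b : ℝ) (z : EuclideanSpace ℝ (Fin n))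
    (hsq : (z i - a) ^ 2 ≤ (z i - b) ^ 2) :
    ‖z - a • EuclideanSpace.single i (1 : ℝ)‖ ≤ ‖z - b • EuclideanSpace.single i (1 : ℝ)‖ := by
  rw [norm_sub_smul_single, norm_sub_smul_single]
  apply Real.sqrt_le_sqrt
  refine Finset.sum_le_sum fun j _ => ?_
  split_ifs with hj
  · subst hj; exact hsq
  · exact le_rfl

/-- Negation of the `i`-th coordinate, as a linear isometry equivalence. -/
noncomputable def negCoordLIE (i : Fin n) :
    EuclideanSpace ℝ (Fin n) ≃ₗᵢ[ℝ] EuclideanSpace ℝ (Fin n) where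
  toFun := reflMap i 0
  invFun := reflMap i 0
  left_inv := reflMap_involutive i 0
  right_inv := reflMap_involutive i 0
  map_add' := by
    intro x y
    ext j
    simp only [reflMap_apply, PiLp.add_apply]
    split_ifs with hj
    · subst hj; ring
    · rfl
  map_smul' := by
    intro c x
    ext j
    simp only [reflMap_apply, PiLp.smul_apply, RingHom.id_apply, smul_eq_mul]
    split_ifs with hj
    · subst hj; ring
    · rfl
  norm_map' := by
    intro z
    rw [EuclideanSpace.norm_eq, EuclideanSpace.norm_eq]
    congr 1
    refine Finset.sum_congr rfl fun j _ => ?_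
    show ‖reflMap i 0 z j‖ ^ 2 = ‖z j‖ ^ 2
    rw [reflMap_apply]
    split_ifs with hj
    · subst hj; rw [Real.norm_eq_abs, Real.norm_eq_abs, show 2*(0:ℝ) - z j = -(z j) by ring, abs_neg]
    · rfl

lemma reflMap_eq_add (i : Fin n) (m : ℝ) :
    reflMap i m = fun z => (2 * m) • EuclideanSpace.single i (1 : ℝ) + negCoordLIE i z := by
  funext z; ext j
  have : (negCoordLIE i z) j = if j = i then 2 * 0 - z i else z j := reflMap_apply i 0 z j
  simp only [reflMap_apply, PiLp.add_apply, PiLp.smul_apply, EuclideanSpace.single_apply,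
    smul_eq_mul, this]
  split_ifs with hj <;> ring

lemma reflMap_measurePreserving (i : Fin n) (m : ℝ) :
    MeasurePreserving (reflMap i m) volume volume := by
  rw [reflMap_eq_add]
  exact (measurePreserving_add_left volume _).comp (negCoordLIE i).measurePreserving

/-- The reflection as a measurable equivalence. -/
noncomputable def reflMapEquiv (i : Fin n) (m : ℝ) :
    EuclideanSpace ℝ (Fin n) ≃ᵐ EuclideanSpace ℝ (Fin n) where
  toEquiv := (reflMap_involutive i m).toPerm _
  measurable_toFun := (reflMap_measurePreserving i m).measurable
  measurable_invFun := (reflMap_measurePreserving i m).measurable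

lemma reflMap_measurableEmbedding (i : Fin n) (m : ℝ) :
    MeasurableEmbedding (reflMap i m) :=
  (reflMapEquiv i m).measurableEmbedding

lemma fourpoint {u v p q : ℝ} (h0u : 0 ≤ u) (huv : u ≤ v) (hqp : q ≤ p) :
    u * p + v * q ≤ u * q + v * p := by nlinarith

end refl_aux

noncomputable def Fker {n : ℕ} (θ : ℝ) (h : EuclideanSpace ℝ (Fin n) → ℝ) (i : Fin n)
    (y : ℝ) (z : EuclideanSpace ℝ (Fin n)) : ENNReal :=
  ENNReal.ofReal (h z * ‖z - y • EuclideanSpace.single i (1 : ℝ)‖ ^ (-θ))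

theorem main_aux (n : ℕ) (i : Fin n) (Ω : Set (EuclideanSpace ℝ (Fin n)))
    (hΩmeas : MeasurableSet Ω)
    (θ : ℝ) (hθ : 0 < θ) (h : EuclideanSpace ℝ (Fin n) → ℝ)
    (hh0 : ∀ z ∈ Ω, 0 ≤ h z) (hhint : IntegrableOn h Ω)
    (η : ℝ) (S : ℝ)
    (hrefl : ∀ y₁ : ℝ, η ≤ y₁ → y₁ < S → ∀ z ∈ Ω, y₁ ≤ z i →
      reflMap i y₁ z ∈ Ω ∧ h z ≤ h (reflMap i y₁ z)) :
    AntitoneOn (fun y₁ : ℝ => ∫⁻ z in Ω, Fker θ h i y₁ z) (Ico η S) := by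
  haveI : Nonempty (Fin n) := ⟨i⟩
  intro a ha b hb hab
  rcases eq_or_lt_of_le hab with rfl | hab
  · exact le_rfl
  show (∫⁻ z in Ω, Fker θ h i b z) ≤ ∫⁻ z in Ω, Fker θ h i a z
  set e : EuclideanSpace ℝ (Fin n) := EuclideanSpace.single i (1 : ℝ) with he
  set m : ℝ := (a + b) / 2 with hm
  have hmη : η ≤ m := by have := ha.1; simp only [hm]; linarith
  have hmS : m < S := by have := hb.2; simp only [hm]; linarith
  set σ : EuclideanSpace ℝ (Fin n) → EuclideanSpace ℝ (Fin n) := reflMap i m with hσ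
  set F : ℝ → EuclideanSpace ℝ (Fin n) → ENNReal := Fker θ h i with hF
  -- coordinate projection is continuous
  have hconti : Continuous fun z : EuclideanSpace ℝ (Fin n) => z i := by
    exact (continuous_apply i).comp (PiLp.continuous_ofLp (p := 2) (β := fun _ : Fin n => ℝ))
  set L : Set (EuclideanSpace ℝ (Fin n)) := Ω ∩ {z | z i ≤ m} with hL
  set R : Set (EuclideanSpace ℝ (Fin n)) := Ω ∩ {z | m < z i} with hR
  have hLmeas : MeasurableSet L := by
    exact hΩmeas.inter (measurableSet_le hconti.measurable measurable_const)
  have hRmeas : MeasurableSet R := by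
    exact hΩmeas.inter (measurableSet_lt measurable_const hconti.measurable)
  have hΩsplit : Ω = L ∪ R := by
    rw [hL, hR, ← Set.inter_union_distrib_left]
    refine (Set.inter_eq_left.mpr fun z _ => ?_).symm
    rcases le_or_gt (z i) m with hzm | hzm
    · exact Or.inl hzm
    · exact Or.inr hzm
  have hdisjLR : Disjoint L R := by
    rw [Set.disjoint_left]
    rintro z ⟨_, h1⟩ ⟨_, h2⟩
    have h1' : z i ≤ m := h1
    have h2' : m < z i := h2
    exact absurd h1' (not_le.2 h2')
  have hσΩ : ∀ z ∈ R, σ z ∈ Ω ∧ h z ≤ h (σ z) := fun z hz =>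
    hrefl m hmη hmS z hz.1 hz.2.le
  have hσi : ∀ z : EuclideanSpace ℝ (Fin n), σ z i = 2 * m - z i := by
    intro z
    rw [hσ, reflMap_apply, if_pos rfl]
  have hσL : σ '' R ⊆ L := by
    rintro _ ⟨z, hz, rfl⟩
    refine ⟨(hσΩ z hz).1, ?_⟩
    have h2 : m < z i := hz.2
    have h3 := hσi z
    show σ z i ≤ m
    rw [h3]
    linarith
  have hemb : MeasurableEmbedding σ := reflMap_measurableEmbedding i m
  have hmp : MeasurePreserving σ volume volume := reflMap_measurePreserving i m
  have hσRmeas : MeasurableSet (σ '' R) := hemb.measurableSet_image.2 hRmeas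
  have hσRΩ : σ '' R ⊆ Ω := hσL.trans inter_subset_left
  -- norm identities
  have h2ma : 2 * m - a = b := by rw [hm]; ring
  have h2mb : 2 * m - b = a := by rw [hm]; ring
  have hnσa : ∀ z : EuclideanSpace ℝ (Fin n), ‖σ z - a • e‖ = ‖z - b • e‖ := by
    intro z
    rw [hσ, he, norm_reflMap_sub_single, h2ma]
  have hnσb : ∀ z : EuclideanSpace ℝ (Fin n), ‖σ z - b • e‖ = ‖z - a • e‖ := by
    intro z
    rw [hσ, he, norm_reflMap_sub_single, h2mb]
  have hnormR : ∀ z ∈ R, ‖z - b • e‖ ≤ ‖z - a • e‖ := by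
    intro z hz
    have h2 : m < z i := hz.2
    refine norm_sub_single_mono i b a z (by nlinarith [hm])
  have hnormL : ∀ z ∈ L, ‖z - a • e‖ ≤ ‖z - b • e‖ := by
    intro z hz
    have h2 : z i ≤ m := hz.2
    refine norm_sub_single_mono i a b z (by nlinarith [hm])
  -- pointwise inequalities
  have keyL : ∀ z ∈ L, z ≠ a • e → F b z ≤ F a z := by
    intro z hz hza
    apply ENNReal.ofReal_le_ofReal
    refine mul_le_mul_of_nonneg_left ?_ (hh0 z hz.1)
    have h0 : 0 < ‖z - a • e‖ := by
      rw [norm_pos_iff, sub_ne_zero]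
      exact hza
    exact Real.rpow_le_rpow_of_nonpos h0 (hnormL z hz) (by linarith)
  have keyR : ∀ z ∈ R, z ≠ b • e → F b z + F b (σ z) ≤ F a z + F a (σ z) := by
    intro z hz hzb
    have hp : 0 < ‖z - b • e‖ := by
      rw [norm_pos_iff, sub_ne_zero]
      exact hzb
    have hq'p' : ‖z - a • e‖ ^ (-θ) ≤ ‖z - b • e‖ ^ (-θ) :=
      Real.rpow_le_rpow_of_nonpos hp (hnormR z hz) (by linarith)
    have hp'0 : (0:ℝ) ≤ ‖z - b • e‖ ^ (-θ) := Real.rpow_nonneg (norm_nonneg _) _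
    have hq'0 : (0:ℝ) ≤ ‖z - a • e‖ ^ (-θ) := Real.rpow_nonneg (norm_nonneg _) _
    have hu0 : 0 ≤ h z := hh0 z hz.1
    have huv : h z ≤ h (σ z) := (hσΩ z hz).2
    have hv0 : 0 ≤ h (σ z) := hh0 _ (hσΩ z hz).1
    show ENNReal.ofReal (h z * ‖z - b • e‖ ^ (-θ)) +
        ENNReal.ofReal (h (σ z) * ‖σ z - b • e‖ ^ (-θ)) ≤
        ENNReal.ofReal (h z * ‖z - a • e‖ ^ (-θ)) +
        ENNReal.ofReal (h (σ z) * ‖σ z - a • e‖ ^ (-θ))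
    rw [hnσa, hnσb]
    rw [← ENNReal.ofReal_add (mul_nonneg hu0 hp'0) (mul_nonneg hv0 hq'0),
      ← ENNReal.ofReal_add (mul_nonneg hu0 hq'0) (mul_nonneg hv0 hp'0)]
    exact ENNReal.ofReal_le_ofReal (fourpoint hu0 huv hq'p')
  -- a.e. avoidance of single points
  have hsing : ∀ (p : EuclideanSpace ℝ (Fin n)) (s : Set (EuclideanSpace ℝ (Fin n))),
      ∀ᵐ z ∂(volume.restrict s), z ≠ p := by
    intro p s
    have hglob : ∀ᵐ z : EuclideanSpace ℝ (Fin n) ∂volume, z ≠ p := by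
      rw [ae_iff]
      have : {z : EuclideanSpace ℝ (Fin n) | ¬z ≠ p} = {p} := by ext w; simp
      rw [this]
      exact measure_singleton p
    exact ae_restrict_of_ae hglob
  -- change of variables
  have hcomp : ∀ y : ℝ, ∫⁻ z in σ '' R, F y z = ∫⁻ z in R, F y (σ z) :=
    fun y => (hmp.setLIntegral_comp_emb hemb (F y) R).symm
  -- measurability
  have hwmeas : ∀ y : ℝ, Measurable fun z : EuclideanSpace ℝ (Fin n) => ‖z - y • e‖ ^ (-θ) := by
    intro y
    have hc : Continuous fun z : EuclideanSpace ℝ (Fin n) => ‖z - y • e‖ ^ θ :=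
      (continuous_id.sub continuous_const).norm.rpow_const fun z => Or.inr hθ.le
    have heq : (fun z : EuclideanSpace ℝ (Fin n) => ‖z - y • e‖ ^ (-θ))
        = fun z => (‖z - y • e‖ ^ θ)⁻¹ :=
      funext fun z => Real.rpow_neg (norm_nonneg _) θ
    rw [heq]
    exact hc.measurable.inv
  have hhae : AEMeasurable h (volume.restrict Ω) := hhint.aemeasurable
  have hFae : ∀ (y : ℝ) (s : Set (EuclideanSpace ℝ (Fin n))), s ⊆ Ω →
      AEMeasurable (F y) (volume.restrict s) := by
    intro y s hs
    have hhs : AEMeasurable h (volume.restrict s) :=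
      hhae.mono_measure (Measure.restrict_mono hs le_rfl)
    exact ENNReal.measurable_ofReal.comp_aemeasurable (hhs.mul (hwmeas y).aemeasurable)
  have hmpR : MeasurePreserving σ (volume.restrict R) (volume.restrict (σ '' R)) :=
    hmp.restrict_image_emb hemb R
  have hFσae : ∀ y : ℝ, AEMeasurable (fun z => F y (σ z)) (volume.restrict R) := fun y =>
    (hFae y (σ '' R) hσRΩ).comp_quasiMeasurePreserving hmpR.quasiMeasurePreserving
  -- part 1
  have part1 : ∫⁻ z in L \ σ '' R, F b z ≤ ∫⁻ z in L \ σ '' R, F a z := by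
    apply lintegral_mono_ae
    filter_upwards [ae_restrict_mem (hLmeas.diff hσRmeas), hsing (a • e) (L \ σ '' R)] with z hz hza
    exact keyL z hz.1 hza
  -- part 2
  have part2 : (∫⁻ z in σ '' R, F b z) + ∫⁻ z in R, F b z ≤
      (∫⁻ z in σ '' R, F a z) + ∫⁻ z in R, F a z := by
    rw [hcomp b, hcomp a]
    calc (∫⁻ z in R, F b (σ z)) + ∫⁻ z in R, F b z
        ≤ ∫⁻ z in R, (F b (σ z) + F b z) := le_lintegral_add _ _
      _ ≤ ∫⁻ z in R, (F a (σ z) + F a z) := by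
          apply lintegral_mono_ae
          filter_upwards [ae_restrict_mem hRmeas, hsing (b • e) R] with z hz hzb
          have h' := keyR z hz hzb
          calc F b (σ z) + F b z = F b z + F b (σ z) := add_comm _ _
            _ ≤ F a z + F a (σ z) := h'
            _ = F a (σ z) + F a z := add_comm _ _
      _ = (∫⁻ z in R, F a (σ z)) + ∫⁻ z in R, F a z := lintegral_add_left' (hFσae a) _
  -- assembly
  have hLsplit : ∀ y : ℝ, ∫⁻ z in L, F y z =
      (∫⁻ z in L \ σ '' R, F y z) + ∫⁻ z in σ '' R, F y z := by
    intro y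
    rw [← lintegral_union hσRmeas disjoint_sdiff_self_left, Set.diff_union_of_subset hσL]
  have hΩint : ∀ y : ℝ, ∫⁻ z in Ω, F y z = (∫⁻ z in L, F y z) + ∫⁻ z in R, F y z := by
    intro y
    rw [hΩsplit, lintegral_union hRmeas hdisjLR]
  calc ∫⁻ z in Ω, F b z = (∫⁻ z in L, F b z) + ∫⁻ z in R, F b z := hΩint b
    _ = (∫⁻ z in L \ σ '' R, F b z) + ((∫⁻ z in σ '' R, F b z) + ∫⁻ z in R, F b z) := by
        rw [hLsplit b, add_assoc]
    _ ≤ (∫⁻ z in L \ σ '' R, F a z) + ((∫⁻ z in σ '' R, F a z) + ∫⁻ z in R, F a z) :=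
        add_le_add part1 part2
    _ = (∫⁻ z in L, F a z) + ∫⁻ z in R, F a z := by rw [hLsplit a, add_assoc]
    _ = ∫⁻ z in Ω, F a z := (hΩint a).symm

/-- Reflection monotonicity: if for every `y₁ ∈ [η, sup_{z∈Ω} z₁)` the reflection
`z ↦ z* = (2y₁ - z₁, z₂, …, zₙ)` maps `Ω ∩ {z₁ ≥ y₁}` into `Ω ∩ {z₁ ≤ y₁}` with
`h(z*) ≥ h(z)`, then `J(y₁) = ∫_Ω h(z)|z - y₁ e₁|^{-θ} dz` is non-increasing on
`[η, sup_{z∈Ω} z₁)`. -/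
theorem stmt4 (n : ℕ) (hn : 1 ≤ n) (Ω : Set (EuclideanSpace ℝ (Fin n)))
    (hΩopen : IsOpen Ω) (hΩbdd : Bornology.IsBounded Ω)
    (θ : ℝ) (hθ : 0 < θ) (h : EuclideanSpace ℝ (Fin n) → ℝ)
    (hh0 : ∀ z ∈ Ω, 0 ≤ h z) (hhint : IntegrableOn h Ω)
    (η : ℝ) (hη : 0 ≤ η)
    (S : ℝ) (hS : IsLUB ((fun z : EuclideanSpace ℝ (Fin n) => z ⟨0, by omega⟩) '' Ω) S)
    (hrefl : ∀ y₁ : ℝ, η ≤ y₁ → y₁ < S → ∀ z ∈ Ω, y₁ ≤ z ⟨0, by omega⟩ →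
      WithLp.toLp 2 (Function.update z ⟨0, by omega⟩ (2 * y₁ - z ⟨0, by omega⟩)) ∈ Ω ∧
      h z ≤ h (WithLp.toLp 2 (Function.update z ⟨0, by omega⟩ (2 * y₁ - z ⟨0, by omega⟩)))) :
    AntitoneOn (fun y₁ : ℝ =>
      ∫⁻ z in Ω, ENNReal.ofReal
        (h z * ‖z - y₁ • (EuclideanSpace.single (⟨0, by omega⟩ : Fin n) (1 : ℝ))‖ ^ (-θ)))
      (Ico η S) := by
  exact main_aux n ⟨0, by omega⟩ Ω hΩopen.measurableSet θ hθ h hh0 hhint η S hrefl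
end

section
/- Let 1 < λ < n be real. For every C¹ function u: [0,∞) → ℝ with compact support, (∫₀^∞ |u(r)|^{n/(λ−1)} r^{n−1} dr)^{(λ−1)/n} ≤ C ∫₀^∞ |u'(r)| r^{λ−1} dr, with C depending only on n and λ. -/
open MeasureTheory Set

/-- For `1 < λ < n` there is `C = C(n,λ)` such that every `C¹` compactly supported
`u : [0,∞) → ℝ` satisfies
`(∫₀^∞ |u(r)|^{n/(λ-1)} r^{n-1} dr)^{(λ-1)/n} ≤ C ∫₀^∞ |u'(r)| r^{λ-1} dr`. -/
theorem stmt9 (n : ℕ) (lam : ℝ) (hl1 : 1 < lam) (hln : lam < n) :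
    ∃ C : ℝ, 0 < C ∧
      ∀ u : ℝ → ℝ, ContDiff ℝ 1 u → HasCompactSupport u →
        (∫⁻ r in Ioi (0 : ℝ),
            ENNReal.ofReal (|u r| ^ ((n : ℝ) / (lam - 1)) * r ^ ((n : ℝ) - 1)))
              ^ ((lam - 1) / n)
          ≤ ENNReal.ofReal C *
            ∫⁻ r in Ioi (0 : ℝ), ENNReal.ofReal (|deriv u r| * r ^ (lam - 1)) := by
  have hn1 : (1:ℝ) < n := hl1.trans hln
  have hn0 : (0:ℝ) < n := by linarith
  have hl0 : (0:ℝ) < lam - 1 := by linarith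
  set q : ℝ := (n : ℝ) / (lam - 1) with hq
  have hqpos : 0 < q := by positivity
  have hq1 : 1 < q := by rw [hq, lt_div_iff₀ hl0]; linarith
  set C : ℝ := (lam - 1) ^ (-((lam - 1) / (n:ℝ))) with hC
  have hCpos : 0 < C := Real.rpow_pos_of_pos hl0 _
  refine ⟨C, hCpos, ?_⟩
  intro u hu hcs
  have hd : Continuous (deriv u) := hu.continuous_deriv le_rfl
  have hcsd : HasCompactSupport (deriv u) := hcs.deriv
  have hcsda : HasCompactSupport (fun s => |deriv u s|) := by
    apply hcsd.mono
    intro x hx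
    simp only [Function.mem_support, abs_ne_zero] at hx
    exact hx
  have habs : Integrable (fun s => |deriv u s|) := hd.abs.integrable_of_hasCompactSupport hcsda
  have hrpow : Continuous fun s : ℝ => s ^ (lam - 1) := by
    rw [continuous_iff_continuousAt]
    intro x
    exact Real.continuousAt_rpow_const x _ (Or.inr hl0.le)
  set g : ℝ → ℝ := fun s => |deriv u s| * s ^ (lam - 1) with hgdef
  have hgc : Continuous g := hd.abs.mul hrpow
  have hgcs : HasCompactSupport g := by
    apply hcsd.mono
    intro x hx
    simp only [hgdef, Function.mem_support] at hx
    intro h0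
    apply hx
    simp [h0]
  have hgint : Integrable g := hgc.integrable_of_hasCompactSupport hgcs
  set I : ℝ := ∫ s in Ioi (0:ℝ), g s with hI
  have hgnn : ∀ s : ℝ, 0 < s → 0 ≤ g s := by
    intro s hs
    exact mul_nonneg (abs_nonneg _) (Real.rpow_nonneg hs.le _)
  have hI0 : 0 ≤ I := setIntegral_nonneg measurableSet_Ioi (fun s hs => hgnn s hs)
  have hIlin : ∫⁻ r in Ioi (0:ℝ), ENNReal.ofReal (g r) = ENNReal.ofReal I :=
    (ofReal_integral_eq_lintegral_ofReal hgint.integrableOn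
      ((ae_restrict_iff' measurableSet_Ioi).2 (Filter.Eventually.of_forall fun s hs => hgnn s hs))).symm
  -- FTC bound
  have hftc : ∀ r : ℝ, |u r| ≤ ∫ s in Ioi r, |deriv u s| := by
    intro r
    obtain ⟨R, hR⟩ := hcs.isCompact.bddAbove
    set b := max r R + 1 with hb
    have hrb : r ≤ b := by
      have := le_max_left r R; linarith
    have hub : u b = 0 := by
      apply image_eq_zero_of_notMem_tsupport
      intro hmem
      have h1 := hR hmem
      have := le_max_right r R
      simp only [hb] at h1
      linarith
    have hFTC : ∫ s in r..b, deriv u s = u b - u r :=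
      intervalIntegral.integral_deriv_eq_sub
        (fun x _ => (hu.differentiable one_ne_zero).differentiableAt)
        (hd.intervalIntegrable r b)
    have h1 : |u r| = |∫ s in r..b, deriv u s| := by
      rw [hFTC, hub, zero_sub, abs_neg]
    rw [h1]
    calc |∫ s in r..b, deriv u s| ≤ ∫ s in r..b, |deriv u s| :=
          intervalIntegral.abs_integral_le_integral_abs hrb
      _ = ∫ s in Ioc r b, |deriv u s| := intervalIntegral.integral_of_le hrb
      _ ≤ ∫ s in Ioi r, |deriv u s| := by
          apply setIntegral_mono_set habs.integrableOn
            (Filter.Eventually.of_forall fun s => abs_nonneg _)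
            (HasSubset.Subset.eventuallyLE Ioc_subset_Ioi_self)
  -- weighted bound
  have hB1 : ∀ r : ℝ, 0 < r → |u r| * r ^ (lam - 1) ≤ I := by
    intro r hr
    calc |u r| * r ^ (lam - 1)
        ≤ (∫ s in Ioi r, |deriv u s|) * r ^ (lam - 1) :=
          mul_le_mul_of_nonneg_right (hftc r) (Real.rpow_nonneg hr.le _)
      _ = ∫ s in Ioi r, |deriv u s| * r ^ (lam - 1) := (integral_mul_const _ _).symm
      _ ≤ ∫ s in Ioi r, g s := by
          apply setIntegral_mono_on (habs.integrableOn.mul_const _) hgint.integrableOn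
            measurableSet_Ioi
          intro s hs
          exact mul_le_mul_of_nonneg_left
            (Real.rpow_le_rpow hr.le (le_of_lt hs) hl0.le) (abs_nonneg _)
      _ ≤ I := by
          apply setIntegral_mono_set hgint.integrableOn
            ((ae_restrict_iff' measurableSet_Ioi).2
              (Filter.Eventually.of_forall fun s hs => hgnn s hs))
            (HasSubset.Subset.eventuallyLE (Ioi_subset_Ioi hr.le))

  -- Fubini part: K := ∫⁻ |u r| r^{lam-2} ≤ I/(lam-1)
  have hK1 : ∀ r : ℝ, 0 < r → ENNReal.ofReal (|u r| * r ^ (lam - 2)) ≤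
      (∫⁻ s in Ioi r, ENNReal.ofReal |deriv u s|) * ENNReal.ofReal (r ^ (lam - 2)) := by
    intro r hr
    have h1 : ENNReal.ofReal (∫ s in Ioi r, |deriv u s|)
        = ∫⁻ s in Ioi r, ENNReal.ofReal |deriv u s| :=
      ofReal_integral_eq_lintegral_ofReal habs.integrableOn
        (Filter.Eventually.of_forall fun s => abs_nonneg _)
    rw [ENNReal.ofReal_mul (abs_nonneg _), ← h1]
    exact mul_le_mul_left (ENNReal.ofReal_le_ofReal (hftc r)) _
  set F : ℝ → ℝ → ENNReal := fun r s =>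
    Set.indicator {p : ℝ × ℝ | p.1 < p.2}
      (fun p => ENNReal.ofReal |deriv u p.2| * ENNReal.ofReal (p.1 ^ (lam - 2))) (r, s) with hF
  have hFmeas : Measurable (Function.uncurry F) := by
    apply Measurable.indicator
    · apply Measurable.mul (f := fun x : ℝ × ℝ => ENNReal.ofReal |deriv u x.2|)
        (g := fun x : ℝ × ℝ => ENNReal.ofReal (x.1 ^ (lam - 2)))
      · exact (ENNReal.measurable_ofReal.comp (hd.abs.measurable.comp measurable_snd))
      · exact (ENNReal.measurable_ofReal.comp
          (((by fun_prop : Measurable fun x : ℝ => x ^ (lam - 2))).comp measurable_fst))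
    · exact measurableSet_lt measurable_fst measurable_snd
  have hFr : ∀ r : ℝ, 0 < r → ∫⁻ s in Ioi (0:ℝ), F r s
      = (∫⁻ s in Ioi r, ENNReal.ofReal |deriv u s|) * ENNReal.ofReal (r ^ (lam - 2)) := by
    intro r hr
    have h1 : (fun s => F r s) = (Ioi r).indicator
        (fun s => ENNReal.ofReal |deriv u s| * ENNReal.ofReal (r ^ (lam - 2))) := by
      funext s
      by_cases h : r < s <;> simp [hF, Set.indicator, h]
    rw [h1, lintegral_indicator measurableSet_Ioi,
      Measure.restrict_restrict measurableSet_Ioi,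
      inter_eq_left.2 (Ioi_subset_Ioi hr.le),
      lintegral_mul_const' _ _ ENNReal.ofReal_ne_top]
  have hIoo : ∀ s : ℝ, 0 < s → ∫⁻ r in Ioo (0:ℝ) s, ENNReal.ofReal (r ^ (lam - 2))
      = ENNReal.ofReal (s ^ (lam - 1) / (lam - 1)) := by
    intro s hs
    have hii : IntervalIntegrable (fun x : ℝ => x ^ (lam - 2)) volume 0 s :=
      intervalIntegral.intervalIntegrable_rpow' (by linarith)
    have hint : IntegrableOn (fun r : ℝ => r ^ (lam - 2)) (Ioo 0 s) := by
      have := (intervalIntegrable_iff_integrableOn_Ioc_of_le hs.le).1 hii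
      exact this.mono_set Ioo_subset_Ioc_self
    rw [← ofReal_integral_eq_lintegral_ofReal hint
      ((ae_restrict_iff' measurableSet_Ioo).2
        (Filter.Eventually.of_forall fun r hr => Real.rpow_nonneg hr.1.le _))]
    congr 1
    rw [← integral_Ioc_eq_integral_Ioo, ← intervalIntegral.integral_of_le hs.le,
      integral_rpow (Or.inl (by linarith))]
    rw [Real.zero_rpow (by linarith : lam - 2 + 1 ≠ 0)]
    norm_num
    ring_nf
  have hFs : ∀ s : ℝ, 0 < s → ∫⁻ r in Ioi (0:ℝ), F r s
      = ENNReal.ofReal |deriv u s| * ENNReal.ofReal (s ^ (lam - 1) / (lam - 1)) := by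
    intro s hs
    have h1 : (fun r => F r s) = (Iio s).indicator
        (fun r => ENNReal.ofReal |deriv u s| * ENNReal.ofReal (r ^ (lam - 2))) := by
      funext r
      by_cases h : r < s <;> simp [hF, Set.indicator, h]
    rw [h1, lintegral_indicator measurableSet_Iio,
      Measure.restrict_restrict measurableSet_Iio]
    have h2 : Iio s ∩ Ioi (0:ℝ) = Ioo 0 s := by
      ext x; simp [mem_Ioo, and_comm]
    rw [h2, lintegral_const_mul' _ _ ENNReal.ofReal_ne_top, hIoo s hs]
  have hswap : ∫⁻ r in Ioi (0:ℝ),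
      (∫⁻ s in Ioi r, ENNReal.ofReal |deriv u s|) * ENNReal.ofReal (r ^ (lam - 2))
      = ∫⁻ s in Ioi (0:ℝ),
        ENNReal.ofReal |deriv u s| * ENNReal.ofReal (s ^ (lam - 1) / (lam - 1)) := by
    calc ∫⁻ r in Ioi (0:ℝ),
        (∫⁻ s in Ioi r, ENNReal.ofReal |deriv u s|) * ENNReal.ofReal (r ^ (lam - 2))
        = ∫⁻ r in Ioi (0:ℝ), ∫⁻ s in Ioi (0:ℝ), F r s := by
          apply setLIntegral_congr_fun measurableSet_Ioi
          exact fun r hr => (hFr r hr).symm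
      _ = ∫⁻ s in Ioi (0:ℝ), ∫⁻ r in Ioi (0:ℝ), F r s :=
          lintegral_lintegral_swap hFmeas.aemeasurable
      _ = _ := by
          apply setLIntegral_congr_fun measurableSet_Ioi
          exact fun s hs => hFs s hs
  have hK : ∫⁻ r in Ioi (0:ℝ), ENNReal.ofReal (|u r| * r ^ (lam - 2))
      ≤ ENNReal.ofReal I * ENNReal.ofReal (1 / (lam - 1)) := by
    calc ∫⁻ r in Ioi (0:ℝ), ENNReal.ofReal (|u r| * r ^ (lam - 2))
        ≤ ∫⁻ r in Ioi (0:ℝ),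
            (∫⁻ s in Ioi r, ENNReal.ofReal |deriv u s|) * ENNReal.ofReal (r ^ (lam - 2)) := by
          apply lintegral_mono_ae
          exact (ae_restrict_iff' measurableSet_Ioi).2
            (Filter.Eventually.of_forall fun r hr => hK1 r hr)
      _ = ∫⁻ s in Ioi (0:ℝ),
            ENNReal.ofReal |deriv u s| * ENNReal.ofReal (s ^ (lam - 1) / (lam - 1)) := hswap
      _ = ∫⁻ s in Ioi (0:ℝ), ENNReal.ofReal (g s) * ENNReal.ofReal (1 / (lam - 1)) := by
          apply setLIntegral_congr_fun measurableSet_Ioi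
          intro s hs; beta_reduce
          rw [← ENNReal.ofReal_mul (abs_nonneg _), ← ENNReal.ofReal_mul (hgnn s hs)]
          congr 1
          simp only [hgdef]
          ring
      _ = (∫⁻ s in Ioi (0:ℝ), ENNReal.ofReal (g s)) * ENNReal.ofReal (1 / (lam - 1)) :=
          lintegral_mul_const' _ _ ENNReal.ofReal_ne_top
      _ = ENNReal.ofReal I * ENNReal.ofReal (1 / (lam - 1)) := by rw [hIlin]
  -- pointwise main bound
  have hpt : ∀ r : ℝ, 0 < r →
      |u r| ^ q * r ^ ((n:ℝ) - 1) ≤ I ^ (q - 1) * (|u r| * r ^ (lam - 2)) := by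
    intro r hr
    by_cases h0 : u r = 0
    · rw [h0]
      simp only [abs_zero, Real.zero_rpow (ne_of_gt hqpos), zero_mul, mul_zero]
      positivity
    have hur : 0 < |u r| := abs_pos.2 h0
    have hrp : (0:ℝ) < r ^ (lam - 1) := Real.rpow_pos_of_pos hr _
    have h1 : |u r| ≤ I * r ^ (1 - lam) := by
      have h2 := hB1 r hr
      have h3 : r ^ (1 - lam) = (r ^ (lam - 1))⁻¹ := by
        rw [← Real.rpow_neg hr.le]; ring_nf
      rw [h3, ← div_eq_mul_inv, le_div_iff₀ hrp]
      exact h2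
    have hexp : (1 - lam) * (q - 1) + ((n:ℝ) - 1) = lam - 2 := by
      rw [hq]; field_simp; ring
    calc |u r| ^ q * r ^ ((n:ℝ) - 1)
        = |u r| ^ (q - 1) * |u r| * r ^ ((n:ℝ) - 1) := by
          rw [show q = q - 1 + 1 by ring, Real.rpow_add_one (ne_of_gt hur)]
          ring_nf
      _ ≤ (I * r ^ (1 - lam)) ^ (q - 1) * |u r| * r ^ ((n:ℝ) - 1) := by
          apply mul_le_mul_of_nonneg_right _ (Real.rpow_nonneg hr.le _)
          apply mul_le_mul_of_nonneg_right _ hur.le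
          exact Real.rpow_le_rpow hur.le h1 (by linarith)
      _ = I ^ (q - 1) * (|u r| * r ^ (lam - 2)) := by
          rw [Real.mul_rpow hI0 (Real.rpow_nonneg hr.le _),
            ← Real.rpow_mul hr.le]
          rw [show I ^ (q-1) * (r ^ ((1-lam)*(q-1))) * |u r| * r ^ ((n:ℝ)-1)
              = I ^ (q-1) * (|u r| * (r ^ ((1-lam)*(q-1)) * r ^ ((n:ℝ)-1))) by ring,
            ← Real.rpow_add hr, hexp]
  -- main estimate
  have hmain : (∫⁻ r in Ioi (0:ℝ), ENNReal.ofReal (|u r| ^ q * r ^ ((n:ℝ) - 1)))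
      ≤ ENNReal.ofReal (I ^ q / (lam - 1)) := by
    calc ∫⁻ r in Ioi (0:ℝ), ENNReal.ofReal (|u r| ^ q * r ^ ((n:ℝ) - 1))
        ≤ ∫⁻ r in Ioi (0:ℝ),
            ENNReal.ofReal (I ^ (q - 1)) * ENNReal.ofReal (|u r| * r ^ (lam - 2)) := by
          apply lintegral_mono_ae
          apply (ae_restrict_iff' measurableSet_Ioi).2
          apply Filter.Eventually.of_forall
          intro r hr
          rw [← ENNReal.ofReal_mul (Real.rpow_nonneg hI0 _)]
          exact ENNReal.ofReal_le_ofReal (hpt r hr)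
      _ = ENNReal.ofReal (I ^ (q - 1)) *
            ∫⁻ r in Ioi (0:ℝ), ENNReal.ofReal (|u r| * r ^ (lam - 2)) :=
          lintegral_const_mul' _ _ ENNReal.ofReal_ne_top
      _ ≤ ENNReal.ofReal (I ^ (q - 1)) *
            (ENNReal.ofReal I * ENNReal.ofReal (1 / (lam - 1))) :=
          mul_le_mul_right hK _
      _ = ENNReal.ofReal (I ^ q / (lam - 1)) := by
          rw [← ENNReal.ofReal_mul (by positivity), ← ENNReal.ofReal_mul (by positivity)]
          congr 1
          have hIq : I ^ (q - 1) * I = I ^ q := by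
            rcases eq_or_lt_of_le hI0 with h | h
            · rw [← h]
              rw [Real.zero_rpow (ne_of_gt hqpos), mul_zero]
            · rw [← Real.rpow_add_one (ne_of_gt h)]
              ring_nf
          rw [← mul_assoc, hIq, mul_one_div]
  -- conclusion
  have hRHS : ∫⁻ r in Ioi (0:ℝ), ENNReal.ofReal (|deriv u r| * r ^ (lam - 1))
      = ENNReal.ofReal I := hIlin
  rw [hRHS]
  have hreal : (I ^ q / (lam - 1)) ^ ((lam - 1) / (n:ℝ)) = C * I := by
    rw [Real.div_rpow (Real.rpow_nonneg hI0 _) hl0.le,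
      ← Real.rpow_mul hI0]
    rw [show q * ((lam - 1) / (n:ℝ)) = 1 by rw [hq]; field_simp, Real.rpow_one]
    rw [hC, Real.rpow_neg hl0.le, div_eq_mul_inv, mul_comm]
  calc (∫⁻ r in Ioi (0:ℝ), ENNReal.ofReal (|u r| ^ q * r ^ ((n:ℝ) - 1))) ^ ((lam - 1) / (n:ℝ))
      ≤ (ENNReal.ofReal (I ^ q / (lam - 1))) ^ ((lam - 1) / (n:ℝ)) :=
        ENNReal.rpow_le_rpow hmain (by positivity)
    _ = ENNReal.ofReal ((I ^ q / (lam - 1)) ^ ((lam - 1) / (n:ℝ))) :=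
        ENNReal.ofReal_rpow_of_nonneg (by positivity) (by positivity)
    _ = ENNReal.ofReal (C * I) := by rw [hreal]
    _ = ENNReal.ofReal C * ENNReal.ofReal I := ENNReal.ofReal_mul hCpos.le
end

section
/- Let 1 ≤ p < λ < n. For any Lipschitz u on the closed unit ball of ℝⁿ, vanishing on the boundary, radially symmetric, and any j ≥ 1, one has ∫_{2^{−j}}^1 |u'(s)| ds ≤ C 2^{j(λ−p)/p} ‖∇u‖_{M^{p,λ}(B₁(0))}, with C depending only on n, p, λ. -/
open MeasureTheory Set Metric Measure
open scoped ENNReal NNReal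

section Aux

lemma my_lintegral_fun_norm {E : Type*} [NormedAddCommGroup E] [NormedSpace ℝ E]
    [MeasurableSpace E] [BorelSpace E] [Nontrivial E] [FiniteDimensional ℝ E]
    (μ : Measure E) [μ.IsAddHaarMeasure] (g : ℝ → ℝ≥0∞) (hg : Measurable g) :
    ∫⁻ x, g ‖x‖ ∂μ =
      μ.toSphere univ * ∫⁻ r in Ioi (0:ℝ), ENNReal.ofReal (r ^ (Module.finrank ℝ E - 1)) * g r := by
  have hG : Measurable ((g ∘ Subtype.val) ∘ (Prod.snd : sphere (0:E) 1 × Ioi (0:ℝ) → Ioi (0:ℝ))) :=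
    (hg.comp measurable_subtype_coe).comp measurable_snd
  calc
    ∫⁻ x, g ‖x‖ ∂μ = ∫⁻ x : ({(0:E)}ᶜ : Set E), g ‖x.1‖ ∂(μ.comap (↑)) := by
      rw [lintegral_subtype_comap (measurableSet_singleton _).compl fun x ↦ g ‖x‖,
        restrict_compl_singleton]
    _ = ∫⁻ x : sphere (0:E) 1 × Ioi (0:ℝ), ((g ∘ Subtype.val) ∘ Prod.snd) x
        ∂μ.toSphere.prod (.volumeIoiPow (Module.finrank ℝ E - 1)) := by
      rw [← μ.measurePreserving_homeomorphUnitSphereProd.lintegral_comp hG]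
      exact lintegral_congr fun x => by simp [homeomorphUnitSphereProd]
    _ = μ.toSphere univ * ∫⁻ r : Ioi (0:ℝ), g r ∂(Measure.volumeIoiPow (Module.finrank ℝ E - 1)) := by
      rw [lintegral_prod _ hG.aemeasurable]
      simp only [Function.comp_apply]
      rw [lintegral_const, mul_comm]
    _ = _ := by
      rw [show (∫⁻ r : Ioi (0:ℝ), g r ∂(Measure.volumeIoiPow (Module.finrank ℝ E - 1)))
          = ∫⁻ r : Ioi (0:ℝ), (g ∘ Subtype.val) r ∂(Measure.volumeIoiPow (Module.finrank ℝ E - 1))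
          from rfl,
        Measure.volumeIoiPow,
        lintegral_withDensity_eq_lintegral_mul _
          ((measurable_subtype_coe.pow_const _).ennreal_ofReal) (hg.comp measurable_subtype_coe)]
      rw [show ((fun (r : Ioi (0:ℝ)) => ENNReal.ofReal (r.1 ^ (Module.finrank ℝ E - 1))) *
          (g ∘ Subtype.val)) = fun (r : Ioi (0:ℝ)) =>
          (fun s : ℝ => ENNReal.ofReal (s ^ (Module.finrank ℝ E - 1)) * g s) r.1 from rfl]
      rw [lintegral_subtype_comap measurableSet_Ioi]

lemma my_deriv_radial_le {E : Type*} [NormedAddCommGroup E] [NormedSpace ℝ E]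
    (f : ℝ → ℝ) {x : E} (hx : x ≠ 0)
    (hd : DifferentiableAt ℝ (fun y : E => f ‖y‖) x) :
    |deriv f ‖x‖| ≤ ‖fderiv ℝ (fun y : E => f ‖y‖) x‖ := by
  set u : E → ℝ := fun y : E => f ‖y‖ with hu
  set v : E := ‖x‖⁻¹ • x with hv
  have hxn : (0:ℝ) < ‖x‖ := norm_pos_iff.2 hx
  have hnv : ‖v‖ = 1 := by
    rw [hv, norm_smul, norm_inv, norm_norm, inv_mul_cancel₀ hxn.ne']
  have hφx : ‖x‖ • v = x := smul_inv_smul₀ hxn.ne' x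
  have h1 : HasDerivAt (fun s : ℝ => u (s • v)) ((fderiv ℝ u x) v) ‖x‖ := by
    have h2 : HasDerivAt (fun s : ℝ => s • v) v ‖x‖ := by
      simpa using (hasDerivAt_id (‖x‖ : ℝ)).smul_const v
    have h4 : HasFDerivAt u (fderiv ℝ u x) (‖x‖ • v) := by rw [hφx]; exact hd.hasFDerivAt
    exact (h4.comp_hasDerivAt ‖x‖ h2)
  have heq : (fun s : ℝ => u (s • v)) =ᶠ[nhds ‖x‖] f := by
    filter_upwards [Ioi_mem_nhds hxn] with s hs
    simp only [hu, norm_smul, hnv, mul_one, Real.norm_eq_abs,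
      abs_of_pos (mem_Ioi.1 hs)]
  have h3 : HasDerivAt f ((fderiv ℝ u x) v) ‖x‖ := h1.congr_of_eventuallyEq heq.symm
  rw [h3.deriv]
  calc |(fderiv ℝ u x) v| ≤ ‖fderiv ℝ u x‖ * ‖v‖ := (fderiv ℝ u x).le_opNorm v
    _ = ‖fderiv ℝ u x‖ := by rw [hnv, mul_one]

lemma my_holder_aux {α : Type*} [MeasurableSpace α] (μ : Measure α) {p : ℝ} (hp : 1 ≤ p)
    (F : α → ℝ≥0∞) (hF : Measurable F) :
    ∫⁻ a, F a ∂μ ≤ (∫⁻ a, F a ^ p ∂μ) ^ (1/p) * (μ univ) ^ (1 - 1/p) := by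
  rcases eq_or_lt_of_le hp with h1 | h1
  · simp [← h1]
  · have hpq : p.HolderConjugate (Real.conjExponent p) := Real.HolderConjugate.conjExponent h1
    have := ENNReal.lintegral_mul_le_Lp_mul_Lq μ hpq hF.aemeasurable aemeasurable_const
      (g := fun _ => (1:ℝ≥0∞))
    simp only [mul_one, ENNReal.one_rpow, lintegral_const, one_mul, Pi.mul_apply] at this
    calc ∫⁻ a, F a ∂μ ≤ (∫⁻ a, F a ^ p ∂μ) ^ (1/p) * (μ univ) ^ (1 / Real.conjExponent p) := this
      _ = _ := by
        congr 1
        congr 1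
        rw [one_div, one_div, ← hpq.one_sub_inv]

lemma my_geom_aux {t : ℝ} (ht : 0 < t) (j : ℕ) :
    ∑ i ∈ Finset.Icc 1 j, (2:ℝ) ^ ((i:ℝ) * t) ≤ (1 - 2 ^ (-t))⁻¹ * 2 ^ ((j:ℝ) * t) := by
  set r : ℝ := 2 ^ (-t) with hr
  have hr0 : 0 < r := Real.rpow_pos_of_pos two_pos _
  have hr1 : r < 1 := by
    rw [hr]
    calc (2:ℝ) ^ (-t) < 2 ^ (0:ℝ) := by
          apply Real.rpow_lt_rpow_left_iff (x := 2) one_lt_two |>.2; linarith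
      _ = 1 := Real.rpow_zero 2
  have key : ∀ i ∈ Finset.Icc 1 j, (2:ℝ) ^ ((i:ℝ) * t) = 2 ^ ((j:ℝ) * t) * r ^ (j - i) := by
    intro i hi
    have hij : i ≤ j := (Finset.mem_Icc.1 hi).2
    rw [hr, ← Real.rpow_natCast ((2:ℝ) ^ (-t)) (j - i), ← Real.rpow_mul (by norm_num) (-t),
      ← Real.rpow_add two_pos]
    congr 1
    have : ((j - i : ℕ) : ℝ) = (j:ℝ) - i := by
      rw [Nat.cast_sub hij]
    rw [this]; ring
  rw [Finset.sum_congr rfl key, ← Finset.mul_sum, mul_comm]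
  gcongr
  have h2 : ∑ i ∈ Finset.Icc 1 j, r ^ (j - i) = ∑ k ∈ Finset.range j, r ^ k := by
    refine Finset.sum_nbij' (fun i => j - i) (fun k => j - k) ?_ ?_ ?_ ?_ ?_
    · intro i hi
      simp only [Finset.mem_Icc] at hi
      simp only [Finset.mem_range]; omega
    · intro k hk
      simp only [Finset.mem_range] at hk
      simp only [Finset.mem_Icc]; omega
    · intro i hi; simp only [Finset.mem_Icc] at hi; omega
    · intro k hk; simp only [Finset.mem_range] at hk; omega
    · intro i hi; rfl
  rw [h2]
  exact Summable.sum_le_tsum (Finset.range j) (fun k _ => by positivity)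
    (summable_geometric_of_lt_one hr0.le hr1) |>.trans
    (le_of_eq (tsum_geometric_of_lt_one hr0.le hr1))

lemma my_cancel_aux {c X Y : ℝ≥0∞} (hc0 : c ≠ 0) (hct : c ≠ ⊤) (h : c * X ≤ Y) :
    X ≤ c⁻¹ * Y := by
  calc X = c⁻¹ * (c * X) := by rw [← mul_assoc, ENNReal.inv_mul_cancel hc0 hct, one_mul]
    _ ≤ c⁻¹ * Y := mul_le_mul_right h _

end Aux

/-- For `1 ≤ p < λ < n`, a radially symmetric Lipschitz function `u(x) = f(|x|)` on the closed
unit ball vanishing on the boundary, and `j ≥ 1`, one has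
`∫_{2^{-j}}^1 |f'(s)| ds ≤ C 2^{j(λ-p)/p} ‖∇u‖_{M^{p,λ}(B₁(0))}` with `C = C(n,p,λ)`. -/
theorem stmt12 (n : ℕ) (hn : 2 ≤ n) (p lam : ℝ) (hp : 1 ≤ p) (hpl : p < lam) (hln : lam < n) :
    ∃ C : ℝ, 0 < C ∧
      ∀ (f : ℝ → ℝ) (K : NNReal) (j : ℕ),
        LipschitzWith K (fun x : EuclideanSpace ℝ (Fin n) => f ‖x‖) →
        f 1 = 0 → 1 ≤ j →
        ∫⁻ s in Icc ((2 : ℝ) ^ (-(j : ℝ))) 1, ENNReal.ofReal |deriv f s|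
          ≤ ENNReal.ofReal (C * 2 ^ ((j : ℝ) * (lam - p) / p)) *
            (⨆ (r : ℝ) (_ : 0 < r)
              (y : EuclideanSpace ℝ (Fin n)) (_ : y ∈ closedBall (0 : EuclideanSpace ℝ (Fin n)) 1),
              ENNReal.ofReal (r ^ (lam - n)) *
                ∫⁻ x in ball (0 : EuclideanSpace ℝ (Fin n)) 1 ∩ ball y r,
                  ENNReal.ofReal
                    (‖fderiv ℝ (fun x : EuclideanSpace ℝ (Fin n) => f ‖x‖) x‖ ^ p)) ^ (1 / p) := by
  classical
  haveI : Nonempty (Fin n) := ⟨⟨0, by omega⟩⟩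
  haveI : Nontrivial (EuclideanSpace ℝ (Fin n)) := inferInstance
  have hp0 : (0:ℝ) < p := lt_of_lt_of_le one_pos hp
  have hn1 : 1 ≤ n := by omega
  have hnR : (1:ℝ) ≤ (n:ℝ) := by exact_mod_cast hn1
  set t : ℝ := (lam - p) / p with htdef
  have ht : 0 < t := div_pos (by linarith) hp0
  -- the dimensional constant
  set κ : ℝ≥0∞ := (volume : Measure (EuclideanSpace ℝ (Fin n))).toSphere univ with hκdef
  have hκ0 : κ ≠ 0 := by
    rw [hκdef, Measure.toSphere_apply_univ]
    exact mul_ne_zero (by simp; omega)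
      (measure_ball_pos volume (0 : EuclideanSpace ℝ (Fin n)) one_pos).ne'
  have hκt : κ ≠ ⊤ := by
    rw [hκdef, Measure.toSphere_apply_univ]
    exact ENNReal.mul_ne_top (ENNReal.natCast_ne_top _) measure_ball_lt_top.ne
  set κ' : ℝ≥0∞ := κ⁻¹ ^ (1/p) with hκ'def
  have hκ'0 : κ' ≠ 0 := (ENNReal.rpow_pos (ENNReal.inv_pos.2 hκt) (ENNReal.inv_ne_top.2 hκ0)).ne'
  have hκ't : κ' ≠ ⊤ := ENNReal.rpow_ne_top_of_nonneg (by positivity) (ENNReal.inv_ne_top.2 hκ0)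
  set k : ℝ := κ'.toReal with hkdef
  have hk0 : 0 < k := ENNReal.toReal_pos hκ'0 hκ't
  have hgeo : (0:ℝ) < 1 - 2 ^ (-t) := by
    have : (2:ℝ) ^ (-t) < 1 := by
      have := Real.rpow_lt_one_of_one_lt_of_neg (x := 2) one_lt_two (neg_neg_of_pos ht)
      simpa using this
    linarith
  refine ⟨k * 2 ^ (((n:ℝ) - lam)/p) * (1 - 2 ^ (-t))⁻¹, by positivity, ?_⟩
  intro f K j hLip hf1 hj
  set u : EuclideanSpace ℝ (Fin n) → ℝ := fun x => f ‖x‖ with hudef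
  set M : ℝ≥0∞ := ⨆ (r : ℝ) (_ : 0 < r)
      (y : EuclideanSpace ℝ (Fin n)) (_ : y ∈ closedBall (0 : EuclideanSpace ℝ (Fin n)) 1),
      ENNReal.ofReal (r ^ (lam - n)) *
        ∫⁻ x in ball (0 : EuclideanSpace ℝ (Fin n)) 1 ∩ ball y r,
          ENNReal.ofReal (‖fderiv ℝ u x‖ ^ p) with hMdef
  set F : ℝ → ℝ≥0∞ := fun s => ENNReal.ofReal |deriv f s| with hFdef
  have hF : Measurable F := (measurable_deriv f).abs.ennreal_ofReal
  have hFp : Measurable (fun s => F s ^ p) :=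
    ENNReal.continuous_rpow_const.measurable.comp hF
  -- the key per-interval estimate
  have key : ∀ i : ℕ, 1 ≤ i →
      ∫⁻ s in Ico ((2:ℝ) ^ (-(i:ℝ))) ((2:ℝ) ^ (1-(i:ℝ))), F s
        ≤ ENNReal.ofReal (k * 2 ^ (((n:ℝ) - lam)/p) * 2 ^ ((i:ℝ) * t)) * M ^ (1/p) := by
    intro i hi
    set a : ℝ := (2:ℝ) ^ (-(i:ℝ)) with hadef
    set b : ℝ := (2:ℝ) ^ (1-(i:ℝ)) with hbdef
    have ha0 : 0 < a := Real.rpow_pos_of_pos two_pos _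
    have hb0 : 0 < b := Real.rpow_pos_of_pos two_pos _
    have hab : a < b := by
      rw [hadef, hbdef]
      exact Real.rpow_lt_rpow_left_iff one_lt_two |>.2 (by linarith)
    have hb1 : b ≤ 1 := by
      rw [hbdef]
      have hi' : (1:ℝ) ≤ (i:ℝ) := by exact_mod_cast hi
      exact Real.rpow_le_one_of_one_le_of_nonpos one_le_two (by linarith)
    have hba : b - a = a := by
      rw [hadef, hbdef, show (1 : ℝ) - (i:ℝ) = 1 + (-(i:ℝ)) by ring, Real.rpow_add two_pos,
        Real.rpow_one]
      ring
    -- Hölder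
    set J : ℝ≥0∞ := ∫⁻ s in Ico a b, F s ^ p with hJdef
    have h1 : ∫⁻ s in Ico a b, F s ≤ J ^ (1/p) * (ENNReal.ofReal a) ^ (1 - 1/p) := by
      have := my_holder_aux (volume.restrict (Ico a b)) hp F hF
      simpa [Measure.restrict_apply_univ, Real.volume_Ico, hba] using this
    -- polar coordinates lower bound
    set A : Set (EuclideanSpace ℝ (Fin n)) := (fun x : EuclideanSpace ℝ (Fin n) => ‖x‖) ⁻¹' (Ico a b)
      with hAdef
    have hAmeas : MeasurableSet A := measurable_norm measurableSet_Ico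
    set g : ℝ → ℝ≥0∞ := (Ico a b).indicator (fun s => F s ^ p) with hgdef
    have hg : Measurable g := hFp.indicator measurableSet_Ico
    have polar := my_lintegral_fun_norm (volume : Measure (EuclideanSpace ℝ (Fin n))) g hg
    have hLHS : ∫⁻ x : EuclideanSpace ℝ (Fin n), g ‖x‖ = ∫⁻ x in A, F ‖x‖ ^ p := by
      rw [← lintegral_indicator hAmeas]
      refine lintegral_congr fun x => ?_
      by_cases hx : ‖x‖ ∈ Ico a b
      · rw [hgdef, Set.indicator_of_mem hx, Set.indicator_of_mem (by exact hx)]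
      · rw [hgdef, Set.indicator_of_notMem hx, Set.indicator_of_notMem (by exact hx)]
    have hsub0 : Ico a b ⊆ Ioi (0:ℝ) := fun s hs => lt_of_lt_of_le ha0 hs.1
    have e1 : ∫⁻ r in Ioi (0:ℝ),
        ENNReal.ofReal (r ^ (Module.finrank ℝ (EuclideanSpace ℝ (Fin n)) - 1)) * g r
        = ∫⁻ r in Ico a b,
            ENNReal.ofReal (r ^ (Module.finrank ℝ (EuclideanSpace ℝ (Fin n)) - 1)) * F r ^ p := by
      rw [show (fun r : ℝ => ENNReal.ofReal (r ^ (Module.finrank ℝ (EuclideanSpace ℝ (Fin n)) - 1)) * g r)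
          = (Ico a b).indicator
            (fun r => ENNReal.ofReal (r ^ (Module.finrank ℝ (EuclideanSpace ℝ (Fin n)) - 1)) * F r ^ p)
          from ?_]
      · rw [lintegral_indicator measurableSet_Ico, Measure.restrict_restrict measurableSet_Ico,
          Set.inter_eq_left.2 hsub0]
      · ext r
        by_cases hr : r ∈ Ico a b
        · rw [hgdef, Set.indicator_of_mem hr, Set.indicator_of_mem hr]
        · rw [hgdef, Set.indicator_of_notMem hr, Set.indicator_of_notMem hr, mul_zero]
    have hcast : a ^ ((n:ℝ) - 1) = a ^ (Module.finrank ℝ (EuclideanSpace ℝ (Fin n)) - 1) := by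
      rw [finrank_euclideanSpace_fin, ← Real.rpow_natCast a (n-1)]
      congr 1
      rw [Nat.cast_sub hn1, Nat.cast_one]
    have e2 : ENNReal.ofReal (a ^ ((n:ℝ) - 1)) * J
        ≤ ∫⁻ r in Ico a b,
            ENNReal.ofReal (r ^ (Module.finrank ℝ (EuclideanSpace ℝ (Fin n)) - 1)) * F r ^ p := by
      rw [hJdef, ← lintegral_const_mul _ hFp]
      refine setLIntegral_mono (by fun_prop) fun r hr => ?_
      rw [hcast, finrank_euclideanSpace_fin]
      gcongr
      exact hr.1
    -- a.e. comparison with the full gradient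
    have h0ae : ∀ᵐ x : EuclideanSpace ℝ (Fin n) ∂volume, x ≠ 0 := by
      refine ae_iff.2 ?_
      simpa using measure_singleton (0 : EuclideanSpace ℝ (Fin n))
    have hae : ∀ᵐ x : EuclideanSpace ℝ (Fin n) ∂volume,
        F ‖x‖ ^ p ≤ ENNReal.ofReal (‖fderiv ℝ u x‖ ^ p) := by
      filter_upwards [hLip.ae_differentiableAt, h0ae] with x hdiff hx0
      have hle : |deriv f ‖x‖| ≤ ‖fderiv ℝ u x‖ := my_deriv_radial_le f hx0 hdiff
      calc F ‖x‖ ^ p = ENNReal.ofReal (|deriv f ‖x‖| ^ p) :=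
            ENNReal.ofReal_rpow_of_nonneg (abs_nonneg _) hp0.le
        _ ≤ _ := ENNReal.ofReal_le_ofReal (Real.rpow_le_rpow (abs_nonneg _) hle hp0.le)
    have h2 : ∫⁻ x in A, F ‖x‖ ^ p ≤ ∫⁻ x in A, ENNReal.ofReal (‖fderiv ℝ u x‖ ^ p) :=
      lintegral_mono_ae (ae_restrict_of_ae hae)
    have hAsub : A ⊆ ball (0 : EuclideanSpace ℝ (Fin n)) 1 ∩ ball (0 : EuclideanSpace ℝ (Fin n)) b :=
      fun x hx => ⟨mem_ball_zero_iff.2 (lt_of_lt_of_le hx.2 hb1), mem_ball_zero_iff.2 hx.2⟩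
    set W : ℝ≥0∞ := ∫⁻ x in ball (0 : EuclideanSpace ℝ (Fin n)) 1 ∩ ball (0 : EuclideanSpace ℝ (Fin n)) b,
        ENNReal.ofReal (‖fderiv ℝ u x‖ ^ p) with hWdef
    have h3 : ∫⁻ x in A, ENNReal.ofReal (‖fderiv ℝ u x‖ ^ p) ≤ W :=
      lintegral_mono_set hAsub
    have h4 : ENNReal.ofReal (b ^ (lam - n)) * W ≤ M := by
      rw [hMdef]
      refine le_iSup_of_le b (le_iSup_of_le hb0 (le_iSup_of_le 0
        (le_iSup_of_le (mem_closedBall_self zero_le_one) le_rfl)))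
    -- combine: J is controlled by M
    have hchain : κ * ENNReal.ofReal (a ^ ((n:ℝ) - 1)) * J ≤ W := by
      calc κ * ENNReal.ofReal (a ^ ((n:ℝ) - 1)) * J
          ≤ κ * ∫⁻ r in Ico a b,
              ENNReal.ofReal (r ^ (Module.finrank ℝ (EuclideanSpace ℝ (Fin n)) - 1)) * F r ^ p := by
            rw [mul_assoc]; exact mul_le_mul_right e2 κ
        _ = ∫⁻ x : EuclideanSpace ℝ (Fin n), g ‖x‖ := by rw [polar, e1]
        _ = ∫⁻ x in A, F ‖x‖ ^ p := hLHS
        _ ≤ W := le_trans h2 h3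
    have hW : W ≤ ENNReal.ofReal (b ^ ((n:ℝ) - lam)) * M := by
      have hc0 : ENNReal.ofReal (b ^ (lam - n)) ≠ 0 :=
        (ENNReal.ofReal_pos.2 (Real.rpow_pos_of_pos hb0 _)).ne'
      have := my_cancel_aux hc0 ENNReal.ofReal_ne_top h4
      rwa [← ENNReal.ofReal_inv_of_pos (Real.rpow_pos_of_pos hb0 _),
        ← Real.rpow_neg hb0.le, neg_sub] at this
    have hJM : J ≤ κ⁻¹ * ENNReal.ofReal (a ^ (1 - (n:ℝ))) *
        (ENNReal.ofReal (b ^ ((n:ℝ) - lam)) * M) := by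
      have hc0 : κ * ENNReal.ofReal (a ^ ((n:ℝ) - 1)) ≠ 0 :=
        mul_ne_zero hκ0 (ENNReal.ofReal_pos.2 (Real.rpow_pos_of_pos ha0 _)).ne'
      have hct : κ * ENNReal.ofReal (a ^ ((n:ℝ) - 1)) ≠ ⊤ :=
        ENNReal.mul_ne_top hκt ENNReal.ofReal_ne_top
      have := my_cancel_aux hc0 hct (le_trans hchain hW)
      rwa [ENNReal.mul_inv (Or.inl hκ0) (Or.inl hκt),
        ← ENNReal.ofReal_inv_of_pos (Real.rpow_pos_of_pos ha0 _),
        ← Real.rpow_neg ha0.le, neg_sub] at this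
    -- put everything together
    have hfinal : J ^ (1/p) * (ENNReal.ofReal a) ^ (1 - 1/p)
        ≤ ENNReal.ofReal (k * 2 ^ (((n:ℝ) - lam)/p) * 2 ^ ((i:ℝ) * t)) * M ^ (1/p) := by
      have hrw : (κ⁻¹ * ENNReal.ofReal (a ^ (1 - (n:ℝ))) *
          (ENNReal.ofReal (b ^ ((n:ℝ) - lam)) * M)) ^ (1/p)
          = ENNReal.ofReal k * ENNReal.ofReal ((a ^ (1 - (n:ℝ))) ^ (1/p)) *
            (ENNReal.ofReal ((b ^ ((n:ℝ) - lam)) ^ (1/p)) * M ^ (1/p)) := by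
        rw [ENNReal.mul_rpow_of_nonneg _ _ (by positivity),
          ENNReal.mul_rpow_of_nonneg _ _ (by positivity),
          ENNReal.mul_rpow_of_nonneg _ _ (by positivity),
          ENNReal.ofReal_rpow_of_pos (Real.rpow_pos_of_pos ha0 _),
          ENNReal.ofReal_rpow_of_pos (Real.rpow_pos_of_pos hb0 _),
          hkdef, hκ'def, ENNReal.ofReal_toReal]
        exact ENNReal.rpow_ne_top_of_nonneg (by positivity) (ENNReal.inv_ne_top.2 hκ0)
      calc J ^ (1/p) * (ENNReal.ofReal a) ^ (1 - 1/p)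
          ≤ (κ⁻¹ * ENNReal.ofReal (a ^ (1 - (n:ℝ))) *
              (ENNReal.ofReal (b ^ ((n:ℝ) - lam)) * M)) ^ (1/p) *
            (ENNReal.ofReal a) ^ (1 - 1/p) := by
            gcongr
        _ = ENNReal.ofReal k * ENNReal.ofReal ((a ^ (1 - (n:ℝ))) ^ (1/p)) *
            (ENNReal.ofReal ((b ^ ((n:ℝ) - lam)) ^ (1/p)) *
              ENNReal.ofReal (a ^ (1 - 1/p))) * M ^ (1/p) := by
            rw [hrw, ENNReal.ofReal_rpow_of_pos ha0]
            try ring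
        _ = ENNReal.ofReal (k * ((a ^ (1 - (n:ℝ))) ^ (1/p) *
              ((b ^ ((n:ℝ) - lam)) ^ (1/p) * a ^ (1 - 1/p)))) * M ^ (1/p) := by
            rw [ENNReal.ofReal_mul hk0.le, ENNReal.ofReal_mul (by positivity),
              ENNReal.ofReal_mul (by positivity)]
            ring_nf
        _ = ENNReal.ofReal (k * 2 ^ (((n:ℝ) - lam)/p) * 2 ^ ((i:ℝ) * t)) * M ^ (1/p) := by
            have hre : ((a ^ (1 - (n:ℝ))) ^ (1/p) *
                ((b ^ ((n:ℝ) - lam)) ^ (1/p) * a ^ (1 - 1/p)))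
                = 2 ^ (((n:ℝ) - lam)/p) * 2 ^ ((i:ℝ) * t) := by
              rw [hadef, hbdef, htdef, ← Real.rpow_mul (by norm_num : (0:ℝ) ≤ 2),
                ← Real.rpow_mul (by norm_num : (0:ℝ) ≤ 2),
                ← Real.rpow_mul (by norm_num : (0:ℝ) ≤ 2),
                ← Real.rpow_mul (by norm_num : (0:ℝ) ≤ 2),
                ← Real.rpow_mul (by norm_num : (0:ℝ) ≤ 2),
                ← Real.rpow_add two_pos, ← Real.rpow_add two_pos, ← Real.rpow_add two_pos]
              exact congrArg (fun e : ℝ => (2:ℝ) ^ e) (by field_simp; ring)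
            rw [hre, ← mul_assoc]
    exact le_trans h1 hfinal
  -- sum the dyadic pieces
  have split : ∀ m : ℕ, 1 ≤ m →
      ∫⁻ s in Ico ((2:ℝ) ^ (-(m:ℝ))) 1, F s
        ≤ ∑ i ∈ Finset.Icc 1 m, ∫⁻ s in Ico ((2:ℝ) ^ (-(i:ℝ))) ((2:ℝ) ^ (1-(i:ℝ))), F s := by
    intro m hm
    induction m with
    | zero => omega
    | succ m ih =>
      rcases Nat.lt_or_ge m 1 with hm1 | hm1
      · interval_cases m
        have h1 : ((2:ℝ) ^ (1-((1:ℕ):ℝ))) = 1 := by norm_num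
        rw [show Finset.Icc 1 1 = {1} from rfl, Finset.sum_singleton, h1]
      · have hstep := ih hm1
        have hle1 : (2:ℝ) ^ (-((m+1:ℕ):ℝ)) ≤ 2 ^ (-(m:ℝ)) := by
          refine (Real.rpow_le_rpow_left_iff one_lt_two).2 ?_
          push_cast; linarith
        have hle2 : (2:ℝ) ^ (-(m:ℝ)) ≤ 1 := by
          have := Real.rpow_le_one_of_one_le_of_nonpos (x := 2) one_le_two
            (by simp : -(m:ℝ) ≤ 0)
          simpa using this
        have hsplit : Ico ((2:ℝ) ^ (-((m+1:ℕ):ℝ))) 1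
            = Ico ((2:ℝ) ^ (-((m+1:ℕ):ℝ))) ((2:ℝ) ^ (-(m:ℝ))) ∪ Ico ((2:ℝ) ^ (-(m:ℝ))) 1 :=
          (Ico_union_Ico_eq_Ico hle1 hle2).symm
        have hcast2 : ((2:ℝ) ^ (1-((m+1:ℕ):ℝ))) = (2:ℝ) ^ (-(m:ℝ)) := by
          congr 1; push_cast; ring
        calc ∫⁻ s in Ico ((2:ℝ) ^ (-((m+1:ℕ):ℝ))) 1, F s
            ≤ (∫⁻ s in Ico ((2:ℝ) ^ (-((m+1:ℕ):ℝ))) ((2:ℝ) ^ (-(m:ℝ))), F s)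
              + ∫⁻ s in Ico ((2:ℝ) ^ (-(m:ℝ))) 1, F s := by
              rw [hsplit]; exact lintegral_union_le _ _ _
          _ ≤ (∫⁻ s in Ico ((2:ℝ) ^ (-((m+1:ℕ):ℝ))) ((2:ℝ) ^ (1-((m+1:ℕ):ℝ))), F s)
              + ∑ i ∈ Finset.Icc 1 m, ∫⁻ s in Ico ((2:ℝ) ^ (-(i:ℝ))) ((2:ℝ) ^ (1-(i:ℝ))), F s := by
              rw [hcast2]; exact add_le_add_right hstep _
          _ = ∑ i ∈ Finset.Icc 1 (m+1), ∫⁻ s in Ico ((2:ℝ) ^ (-(i:ℝ))) ((2:ℝ) ^ (1-(i:ℝ))), F s := by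
              rw [Finset.sum_Icc_succ_top (by omega : 1 ≤ m + 1)]
              ring
  -- conclude
  have hIccIco : ∫⁻ s in Icc ((2:ℝ) ^ (-(j:ℝ))) 1, F s = ∫⁻ s in Ico ((2:ℝ) ^ (-(j:ℝ))) 1, F s := by
    rw [← Measure.restrict_congr_set Ico_ae_eq_Icc]
  calc ∫⁻ s in Icc ((2:ℝ) ^ (-(j:ℝ))) 1, ENNReal.ofReal |deriv f s|
      = ∫⁻ s in Ico ((2:ℝ) ^ (-(j:ℝ))) 1, F s := hIccIco
    _ ≤ ∑ i ∈ Finset.Icc 1 j, ∫⁻ s in Ico ((2:ℝ) ^ (-(i:ℝ))) ((2:ℝ) ^ (1-(i:ℝ))), F s := split j hj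
    _ ≤ ∑ i ∈ Finset.Icc 1 j,
        ENNReal.ofReal (k * 2 ^ (((n:ℝ) - lam)/p) * 2 ^ ((i:ℝ) * t)) * M ^ (1/p) :=
        Finset.sum_le_sum fun i hi => key i (Finset.mem_Icc.1 hi).1
    _ = ENNReal.ofReal (∑ i ∈ Finset.Icc 1 j, k * 2 ^ (((n:ℝ) - lam)/p) * 2 ^ ((i:ℝ) * t)) *
        M ^ (1/p) := by
        rw [← Finset.sum_mul, ← ENNReal.ofReal_sum_of_nonneg fun i _ => by positivity]
    _ ≤ ENNReal.ofReal (k * 2 ^ (((n:ℝ) - lam)/p) * ((1 - 2 ^ (-t))⁻¹ * 2 ^ ((j:ℝ) * t))) *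
        M ^ (1/p) := by
        refine mul_le_mul_left (ENNReal.ofReal_le_ofReal ?_) _
        rw [← Finset.mul_sum]
        exact mul_le_mul_of_nonneg_left (my_geom_aux ht j) (by positivity)
    _ = ENNReal.ofReal (k * 2 ^ (((n:ℝ) - lam)/p) * (1 - 2 ^ (-t))⁻¹ *
          2 ^ ((j:ℝ) * (lam - p) / p)) * M ^ (1/p) := by
        congr 2
        rw [htdef, mul_div_assoc]
        ring
end

section
/- Let f: ℝⁿ → [0,∞) be measurable with compact support, f not a.e. zero, and let 1 < p < λ < n. Then for a.e. x ∈ ℝⁿ, the Riesz potential I₁f(x) = ∫_{ℝⁿ} f(y)|y−x|^{1−n} dy satisfies I₁f(x) ≤ C (M_{λ/p}f(x))^{p/λ} (M₀f(x))^{1−p/λ}, where M_β f(x) = sup_{r>0} r^{β−n} ∫_{B_r(x)} f(z) dz and C depends only on n, p, λ. -/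
open MeasureTheory Set Metric

open scoped ENNReal


private lemma rpow_one_sub_eq {n : ℕ} (hn : 2 ≤ n) {r : ℝ} (hr : 0 < r) :
    r ^ (1 - (n : ℝ)) = (r ^ (n - 1))⁻¹ := by
  have h1 : (1:ℕ) ≤ n := by omega
  have : (1 : ℝ) - n = -(((n - 1 : ℕ) : ℝ)) := by
    push_cast [Nat.cast_sub h1]; ring
  rw [this, Real.rpow_neg hr.le, Real.rpow_natCast]

private lemma near_bound {n : ℕ} (hn : 2 ≤ n) (x : EuclideanSpace ℝ (Fin n))
    (g : EuclideanSpace ℝ (Fin n) → ℝ≥0∞) (hg : Measurable g)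
    (A : ℝ≥0∞)
    (hA : ∀ r : ℝ, 0 < r → ∫⁻ z in ball x r, g z ≤ ENNReal.ofReal (r ^ (n : ℝ)) * A)
    {δ : ℝ} (hδ : 0 < δ) :
    ∫⁻ y in ball x δ, g y * ENNReal.ofReal (‖y - x‖ ^ (1 - (n : ℝ))) ≤
      ENNReal.ofReal ((2:ℝ) ^ (2 * (n:ℝ)) * δ) * 2 * A := by

  set h : EuclideanSpace ℝ (Fin n) → ℝ≥0∞ := fun y => g y * ENNReal.ofReal (‖y - x‖ ^ (1 - (n : ℝ))) with hh
  set S : ℕ → Set (EuclideanSpace ℝ (Fin n)) := fun k => closedBall x (δ / 2 ^ k) \ ball x (δ / 2 ^ (k + 1)) with hS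
  have hsub : ball x δ \ {x} ⊆ ⋃ k, S k := by
    rintro y ⟨hy1, hy2⟩
    have ht0 : 0 < dist y x := dist_pos.2 (by simpa using hy2)
    have htδ : dist y x < δ := mem_ball.1 hy1
    have h1 : 1 ≤ δ / dist y x := (one_le_div ht0).2 htδ.le
    obtain ⟨k, hk1, hk2⟩ := exists_nat_pow_near h1 (one_lt_two (α := ℝ))
    refine mem_iUnion.2 ⟨k, ?_, ?_⟩
    · rw [mem_closedBall, le_div_iff₀ (pow_pos two_pos k)]
      calc dist y x * 2 ^ k = 2 ^ k * dist y x := by ring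
        _ ≤ (δ / dist y x) * dist y x := by
            exact mul_le_mul_of_nonneg_right hk1 ht0.le
        _ = δ := by field_simp
    · intro hmem
      rw [mem_ball] at hmem
      have h2 : δ < 2 ^ (k + 1) * dist y x := by
        rw [div_lt_iff₀ ht0] at hk2; linarith
      rw [lt_div_iff₀ (by positivity : (0:ℝ) < 2 ^ (k+1))] at hmem
      nlinarith
  have key : ∀ k : ℕ, ∫⁻ y in S k, h y ≤
      ENNReal.ofReal ((2:ℝ) ^ (2 * (n:ℝ)) * δ * (2⁻¹:ℝ) ^ (k + 1)) * A := by
    intro k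
    have hrk : (0:ℝ) < δ / 2 ^ (k+1) := div_pos hδ (pow_pos two_pos _)
    have hrk' : (0:ℝ) < δ / 2 ^ k := div_pos hδ (pow_pos two_pos _)
    have step1 : ∫⁻ y in S k, h y ≤
        (∫⁻ y in S k, g y) * ENNReal.ofReal ((δ / 2 ^ (k+1)) ^ (1 - (n:ℝ))) := by
      rw [← lintegral_mul_const _ hg]
      refine setLIntegral_mono (hg.mul_const _) (fun y hy => ?_)
      refine mul_le_mul_right (ENNReal.ofReal_le_ofReal ?_) _
      have hyge : δ / 2 ^ (k+1) ≤ dist y x := by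
        by_contra hc
        exact hy.2 (mem_ball.2 (lt_of_not_ge hc))
      have hne : ‖y - x‖ = dist y x := by rw [dist_eq_norm]
      rw [hne]
      refine Real.rpow_le_rpow_of_nonpos hrk hyge ?_
      have : (2:ℝ) ≤ n := by exact_mod_cast hn
      linarith
    have step2 : ∫⁻ y in S k, g y ≤ ENNReal.ofReal ((2 * (δ / 2 ^ k)) ^ (n:ℝ)) * A := by
      refine le_trans (lintegral_mono_set ?_) (hA _ (by positivity))
      refine (diff_subset).trans ?_
      exact closedBall_subset_ball (by linarith)
    calc ∫⁻ y in S k, h y ≤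
        (ENNReal.ofReal ((2 * (δ / 2 ^ k)) ^ (n:ℝ)) * A) * ENNReal.ofReal ((δ / 2 ^ (k+1)) ^ (1 - (n:ℝ))) :=
          step1.trans (mul_le_mul_left step2 _)
      _ = ENNReal.ofReal ((δ / 2 ^ (k+1)) ^ (1 - (n:ℝ)) * (2 * (δ / 2 ^ k)) ^ (n:ℝ)) * A := by
          rw [ENNReal.ofReal_mul (by positivity)]; ring
      _ = ENNReal.ofReal ((2:ℝ) ^ (2 * (n:ℝ)) * δ * (2⁻¹:ℝ) ^ (k + 1)) * A := by
          congr 1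
          congr 1
          rw [rpow_one_sub_eq hn hrk]
          rw [show ((n:ℝ)) = ((n:ℕ):ℝ) from rfl, Real.rpow_natCast]
          rw [show (2:ℝ) ^ (2 * (n:ℝ)) = ((2:ℝ) ^ (2*n : ℕ)) by
            rw [← Real.rpow_natCast 2 (2*n)]; push_cast; ring_nf]
          obtain ⟨m, rfl⟩ : ∃ m, n = m + 1 := ⟨n - 1, by omega⟩
          simp only [Nat.add_sub_cancel]
          field_simp
          rw [div_pow, div_pow, one_div_pow, pow_succ (2:ℝ) k]
          field_simp
          ring
  calc ∫⁻ y in ball x δ, h y = ∫⁻ y in ball x δ \ {x}, h y := by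
        refine (setLIntegral_congr ?_).symm
        haveI : Nonempty (Fin n) := ⟨⟨0, by omega⟩⟩
        haveI : Nontrivial (EuclideanSpace ℝ (Fin n)) := inferInstance
        exact diff_ae_eq_self.2 (measure_mono_null inter_subset_right (measure_singleton x))
    _ ≤ ∫⁻ y in ⋃ k, S k, h y := lintegral_mono_set hsub
    _ ≤ ∑' k, ∫⁻ y in S k, h y := lintegral_iUnion_le _ _
    _ ≤ ∑' k : ℕ, ENNReal.ofReal ((2:ℝ) ^ (2 * (n:ℝ)) * δ * (2⁻¹:ℝ) ^ (k + 1)) * A :=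
        ENNReal.tsum_le_tsum key
    _ ≤ ENNReal.ofReal ((2:ℝ) ^ (2 * (n:ℝ)) * δ) * 2 * A := by
        have heq : ∀ k : ℕ, ENNReal.ofReal ((2:ℝ) ^ (2 * (n:ℝ)) * δ * (2⁻¹:ℝ) ^ (k + 1)) * A
            = ENNReal.ofReal ((2:ℝ) ^ (2 * (n:ℝ)) * δ) * ((2⁻¹ : ℝ≥0∞) ^ (k+1) * A) := by
          intro k
          rw [ENNReal.ofReal_mul (by positivity), ENNReal.ofReal_pow (by norm_num)]
          rw [show ENNReal.ofReal (2⁻¹:ℝ) = (2⁻¹ : ℝ≥0∞) by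
            rw [ENNReal.ofReal_inv_of_pos two_pos]; norm_num]
          ring
        simp_rw [heq]
        rw [ENNReal.tsum_mul_left, ENNReal.tsum_mul_right, mul_assoc]
        refine mul_le_mul_right (mul_le_mul_left ?_ A) _
        calc (∑' k : ℕ, (2⁻¹ : ℝ≥0∞) ^ (k+1)) ≤ ∑' k : ℕ, (2⁻¹ : ℝ≥0∞) ^ k :=
              ENNReal.tsum_le_tsum (fun k => pow_le_pow_of_le_one (by positivity) (by norm_num) (by omega))
          _ = (1 - 2⁻¹)⁻¹ := ENNReal.tsum_geometric _
          _ = 2 := by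
              rw [ENNReal.one_sub_inv_two]
              simp

private lemma far_bound {n : ℕ} (hn : 2 ≤ n) {q : ℝ} (hq1 : 1 < q) (hqn : q ≤ n)
    (x : EuclideanSpace ℝ (Fin n))
    (g : EuclideanSpace ℝ (Fin n) → ℝ≥0∞) (hg : Measurable g)
    (B : ℝ≥0∞)
    (hB : ∀ r : ℝ, 0 < r → ∫⁻ z in ball x r, g z ≤ ENNReal.ofReal (r ^ ((n : ℝ) - q)) * B)
    {δ : ℝ} (hδ : 0 < δ) :
    ∫⁻ y in (ball x δ)ᶜ, g y * ENNReal.ofReal (‖y - x‖ ^ (1 - (n : ℝ))) ≤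
      ENNReal.ofReal ((2:ℝ) ^ (n:ℝ) * δ ^ (1 - q)) *
        (1 - ENNReal.ofReal ((2:ℝ) ^ (1 - q)))⁻¹ * B := by
  set h : EuclideanSpace ℝ (Fin n) → ℝ≥0∞ :=
    fun y => g y * ENNReal.ofReal (‖y - x‖ ^ (1 - (n : ℝ))) with hh
  set S : ℕ → Set (EuclideanSpace ℝ (Fin n)) :=
    fun k => ball x (2 ^ (k+1) * δ) \ ball x (2 ^ k * δ) with hS
  have hsub : (ball x δ)ᶜ ⊆ ⋃ k, S k := by
    intro y hy
    have htδ : δ ≤ dist y x := by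
      by_contra hc
      exact hy (mem_ball.2 (lt_of_not_ge hc))
    have ht0 : 0 < dist y x := lt_of_lt_of_le hδ htδ
    have h1 : 1 ≤ dist y x / δ := (one_le_div hδ).2 htδ
    obtain ⟨k, hk1, hk2⟩ := exists_nat_pow_near h1 (one_lt_two (α := ℝ))
    refine mem_iUnion.2 ⟨k, ?_, ?_⟩
    · rw [mem_ball]
      rw [div_lt_iff₀ hδ] at hk2
      linarith
    · intro hmem
      rw [mem_ball] at hmem
      rw [le_div_iff₀ hδ] at hk1
      linarith
  set ρ : ℝ := (2:ℝ) ^ (1 - q) with hρ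
  have hρ0 : 0 < ρ := Real.rpow_pos_of_pos two_pos _
  have hρ1 : ρ < 1 := Real.rpow_lt_one_of_one_lt_of_neg one_lt_two (by linarith)
  have key : ∀ k : ℕ, ∫⁻ y in S k, h y ≤
      ENNReal.ofReal ((2:ℝ) ^ (n:ℝ) * δ ^ (1 - q)) * (ENNReal.ofReal ρ) ^ k * B := by
    intro k
    have hP : (0:ℝ) < 2 ^ k * δ := by positivity
    have hP' : (0:ℝ) < 2 ^ (k+1) * δ := by positivity
    have step1 : ∫⁻ y in S k, h y ≤
        (∫⁻ y in S k, g y) * ENNReal.ofReal ((2 ^ k * δ) ^ (1 - (n:ℝ))) := by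
      rw [← lintegral_mul_const _ hg]
      refine setLIntegral_mono (hg.mul_const _) (fun y hy => ?_)
      refine mul_le_mul_right (ENNReal.ofReal_le_ofReal ?_) _
      have hyge : 2 ^ k * δ ≤ dist y x := by
        by_contra hc
        exact hy.2 (mem_ball.2 (lt_of_not_ge hc))
      rw [show ‖y - x‖ = dist y x from (dist_eq_norm _ _).symm]
      refine Real.rpow_le_rpow_of_nonpos hP hyge ?_
      have : (2:ℝ) ≤ n := by exact_mod_cast hn
      linarith
    have step2 : ∫⁻ y in S k, g y ≤ ENNReal.ofReal ((2 ^ (k+1) * δ) ^ ((n:ℝ) - q)) * B := by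
      exact le_trans (lintegral_mono_set diff_subset) (hB _ hP')
    have coef : (2 ^ k * δ) ^ (1 - (n:ℝ)) * (2 ^ (k+1) * δ) ^ ((n:ℝ) - q) ≤
        (2:ℝ) ^ (n:ℝ) * δ ^ (1 - q) * ρ ^ k := by
      have e1 : ((2:ℝ) ^ (k+1) * δ) = 2 * (2 ^ k * δ) := by ring
      rw [e1, Real.mul_rpow (by norm_num) hP.le]
      have e2 : (2 ^ k * δ : ℝ) ^ (1 - (n:ℝ)) * ((2:ℝ) ^ ((n:ℝ) - q) * (2 ^ k * δ) ^ ((n:ℝ) - q))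
          = (2:ℝ) ^ ((n:ℝ) - q) * (2 ^ k * δ) ^ (1 - q) := by
        rw [mul_comm ((2:ℝ) ^ ((n:ℝ) - q)) _, ← mul_assoc, ← Real.rpow_add hP,
          show (1 - (n:ℝ)) + ((n:ℝ) - q) = 1 - q by ring]
        ring
      rw [e2]
      have e3 : ((2:ℝ) ^ k * δ) ^ (1 - q) = ρ ^ k * δ ^ (1 - q) := by
        rw [Real.mul_rpow (by positivity) hδ.le]
        congr 1
        rw [← Real.rpow_natCast (2:ℝ) k, ← Real.rpow_mul (by norm_num),
          ← Real.rpow_natCast ρ k, hρ, ← Real.rpow_mul (by norm_num)]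
        ring_nf
      rw [e3]
      have e4 : (2:ℝ) ^ ((n:ℝ) - q) ≤ (2:ℝ) ^ (n:ℝ) :=
        Real.rpow_le_rpow_of_exponent_le one_le_two (by linarith)
      calc (2:ℝ) ^ ((n:ℝ) - q) * (ρ ^ k * δ ^ (1 - q))
          ≤ (2:ℝ) ^ (n:ℝ) * (ρ ^ k * δ ^ (1 - q)) := by
            exact mul_le_mul_of_nonneg_right e4 (by positivity)
        _ = (2:ℝ) ^ (n:ℝ) * δ ^ (1 - q) * ρ ^ k := by ring
    calc ∫⁻ y in S k, h y
        ≤ (ENNReal.ofReal ((2 ^ (k+1) * δ) ^ ((n:ℝ) - q)) * B) *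
            ENNReal.ofReal ((2 ^ k * δ) ^ (1 - (n:ℝ))) :=
          step1.trans (mul_le_mul_left step2 _)
      _ = ENNReal.ofReal ((2 ^ k * δ) ^ (1 - (n:ℝ)) * (2 ^ (k+1) * δ) ^ ((n:ℝ) - q)) * B := by
          rw [ENNReal.ofReal_mul (by positivity)]; ring
      _ ≤ ENNReal.ofReal ((2:ℝ) ^ (n:ℝ) * δ ^ (1 - q) * ρ ^ k) * B :=
          mul_le_mul_left (ENNReal.ofReal_le_ofReal coef) _
      _ = ENNReal.ofReal ((2:ℝ) ^ (n:ℝ) * δ ^ (1 - q)) * (ENNReal.ofReal ρ) ^ k * B := by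
          rw [ENNReal.ofReal_mul (by positivity), ENNReal.ofReal_pow hρ0.le]
  calc ∫⁻ y in (ball x δ)ᶜ, h y ≤ ∫⁻ y in ⋃ k, S k, h y := lintegral_mono_set hsub
    _ ≤ ∑' k, ∫⁻ y in S k, h y := lintegral_iUnion_le _ _
    _ ≤ ∑' k : ℕ, ENNReal.ofReal ((2:ℝ) ^ (n:ℝ) * δ ^ (1 - q)) * (ENNReal.ofReal ρ) ^ k * B :=
        ENNReal.tsum_le_tsum key
    _ = ENNReal.ofReal ((2:ℝ) ^ (n:ℝ) * δ ^ (1 - q)) *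
          (1 - ENNReal.ofReal ((2:ℝ) ^ (1 - q)))⁻¹ * B := by
        rw [ENNReal.tsum_mul_right, ENNReal.tsum_mul_left, ENNReal.tsum_geometric, hρ]

/-- Adams' interpolation inequality: for measurable compactly supported `f ≥ 0`, not a.e. zero,
and `1 < p < λ < n`, for a.e. `x` the Riesz potential satisfies
`I₁f(x) ≤ C (M_{λ/p}f(x))^{p/λ} (M₀f(x))^{1-p/λ}`, where
`M_β f(x) = sup_{r>0} r^{β-n} ∫_{B_r(x)} f`. -/
theorem stmt13 (n : ℕ) (hn : 2 ≤ n) (p lam : ℝ) (hp : 1 < p) (hpl : p < lam) (hln : lam < n) :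
    ∃ C : ℝ, 0 < C ∧
      ∀ f : EuclideanSpace ℝ (Fin n) → ℝ, Measurable f → (∀ x, 0 ≤ f x) →
        HasCompactSupport f → ¬ (f =ᵐ[volume] (0 : EuclideanSpace ℝ (Fin n) → ℝ)) →
        ∀ᵐ x : EuclideanSpace ℝ (Fin n) ∂volume,
          (∫⁻ y, ENNReal.ofReal (f y * ‖y - x‖ ^ (1 - (n : ℝ))))
            ≤ ENNReal.ofReal C *
              (⨆ (r : ℝ) (_ : 0 < r), ENNReal.ofReal (r ^ (lam / p - n)) *
                  ∫⁻ z in ball x r, ENNReal.ofReal (f z)) ^ (p / lam) *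
              (⨆ (r : ℝ) (_ : 0 < r), ENNReal.ofReal (r ^ (0 - (n : ℝ))) *
                  ∫⁻ z in ball x r, ENNReal.ofReal (f z)) ^ (1 - p / lam) := by

  have hp0 : 0 < p := by linarith
  have hl0 : 0 < lam := by linarith
  set q : ℝ := lam / p with hqdef
  set s : ℝ := p / lam with hsdef
  have hq1 : 1 < q := (one_lt_div hp0).2 hpl
  have hqn : q ≤ n := le_trans (div_le_self hl0.le hp.le) hln.le
  have hs0 : 0 < s := div_pos hp0 hl0
  have hs1 : s < 1 := (div_lt_one hl0).2 hpl
  have hsq : s * q = 1 := by rw [hsdef, hqdef]; field_simp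
  set Kq : ℝ≥0∞ := (1 - ENNReal.ofReal ((2:ℝ) ^ (1 - q)))⁻¹ with hKq
  have hρ1 : ENNReal.ofReal ((2:ℝ) ^ (1 - q)) < 1 := by
    rw [← ENNReal.ofReal_one]
    exact (ENNReal.ofReal_lt_ofReal_iff_of_nonneg (by positivity)).2
      (Real.rpow_lt_one_of_one_lt_of_neg one_lt_two (by linarith))
  have hKqtop : Kq ≠ ⊤ := by
    rw [hKq, Ne, ENNReal.inv_eq_top, tsub_eq_zero_iff_le]
    exact not_le.2 hρ1
  set K : ℝ≥0∞ := ENNReal.ofReal ((2:ℝ) ^ (2 * (n:ℝ))) * 2 +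
    ENNReal.ofReal ((2:ℝ) ^ (n:ℝ)) * Kq with hK
  have hKtop : K ≠ ⊤ := by
    rw [hK]
    exact ENNReal.add_ne_top.2 ⟨ENNReal.mul_ne_top ENNReal.ofReal_ne_top (by norm_num),
      ENNReal.mul_ne_top ENNReal.ofReal_ne_top hKqtop⟩
  have hK0 : K ≠ 0 := by
    rw [hK]
    intro h0
    rcases add_eq_zero.1 h0 with ⟨h1, -⟩
    rcases mul_eq_zero.1 h1 with h2 | h2
    · exact (ENNReal.ofReal_pos.2 (by positivity)).ne' h2
    · norm_num at h2
  have hCK : ENNReal.ofReal K.toReal = K := ENNReal.ofReal_toReal hKtop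
  refine ⟨K.toReal, ENNReal.toReal_pos hK0 hKtop, ?_⟩
  intro f hf hf0 hfc hfne
  refine Filter.Eventually.of_forall (fun x => ?_)
  set g : EuclideanSpace ℝ (Fin n) → ℝ≥0∞ := fun y => ENNReal.ofReal (f y) with hgdef
  have hg : Measurable g := hf.ennreal_ofReal
  set Mq : ℝ≥0∞ := ⨆ (r : ℝ) (_ : 0 < r), ENNReal.ofReal (r ^ (q - (n:ℝ))) *
    ∫⁻ z in ball x r, g z with hMqdef
  set M0 : ℝ≥0∞ := ⨆ (r : ℝ) (_ : 0 < r), ENNReal.ofReal (r ^ (0 - (n:ℝ))) *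
    ∫⁻ z in ball x r, g z with hM0def
  have hLHS : (∫⁻ y, ENNReal.ofReal (f y * ‖y - x‖ ^ (1 - (n:ℝ)))) =
      ∫⁻ y, g y * ENNReal.ofReal (‖y - x‖ ^ (1 - (n:ℝ))) :=
    lintegral_congr fun y => ENNReal.ofReal_mul (hf0 y)
  -- positivity of the maximal functions
  obtain ⟨R, hR0, hRs⟩ := hfc.isBounded.subset_ball_lt 0 x
  have hgtotal : ∫⁻ y, g y ≠ 0 := by
    rw [Ne, lintegral_eq_zero_iff hg]
    intro hzero
    refine hfne (hzero.mono fun y hy => ?_)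
    have hy0 : ENNReal.ofReal (f y) = 0 := hy
    have := ENNReal.ofReal_eq_zero.1 hy0
    simpa using le_antisymm this (hf0 y)
  have hcompl : ∫⁻ y in (ball x R)ᶜ, g y = 0 := by
    have hz : ∀ y ∈ (ball x R)ᶜ, g y = 0 := by
      intro y hy
      have hfy : f y = 0 := image_eq_zero_of_notMem_tsupport (fun hmem => hy (hRs hmem))
      simp [hgdef, hfy]
    calc ∫⁻ y in (ball x R)ᶜ, g y = ∫⁻ _ in (ball x R)ᶜ, 0 :=
          setLIntegral_congr_fun measurableSet_ball.compl hz
      _ = 0 := lintegral_zero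
  have hgR : ∫⁻ z in ball x R, g z ≠ 0 := by
    intro h0
    apply hgtotal
    rw [← lintegral_add_compl g measurableSet_ball (A := ball x R), h0, hcompl, add_zero]
  have hfac : ∀ e : ℝ, ENNReal.ofReal (R ^ e) ≠ 0 :=
    fun e => (ENNReal.ofReal_pos.2 (Real.rpow_pos_of_pos hR0 e)).ne'
  have hMq0 : Mq ≠ 0 := by
    intro h0
    have hle := le_iSup₂ (f := fun (r : ℝ) (_ : 0 < r) => ENNReal.ofReal (r ^ (q - (n:ℝ))) *
      ∫⁻ z in ball x r, g z) R hR0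
    rw [← hMqdef, h0, le_zero_iff] at hle
    rcases mul_eq_zero.1 hle with h | h
    · exact hfac _ h
    · exact hgR h
  have hM00 : M0 ≠ 0 := by
    intro h0
    have hle := le_iSup₂ (f := fun (r : ℝ) (_ : 0 < r) => ENNReal.ofReal (r ^ (0 - (n:ℝ))) *
      ∫⁻ z in ball x r, g z) R hR0
    rw [← hM0def, h0, le_zero_iff] at hle
    rcases mul_eq_zero.1 hle with h | h
    · exact hfac _ h
    · exact hgR h
  have hofC : ENNReal.ofReal K.toReal ≠ 0 := by
    rw [hCK]; exact hK0
  -- trivial cases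
  by_cases hMqtop : Mq = ⊤
  · have : ENNReal.ofReal K.toReal * Mq ^ s * M0 ^ (1 - s) = ⊤ := by
      rw [hMqtop, ENNReal.top_rpow_of_pos hs0, ENNReal.mul_top hofC,
        ENNReal.top_mul]
      rw [Ne, ENNReal.rpow_eq_zero_iff]
      push_neg
      exact ⟨fun h => absurd h hM00, fun _ => by linarith⟩
    rw [this]; exact le_top
  by_cases hM0top : M0 = ⊤
  · have : ENNReal.ofReal K.toReal * Mq ^ s * M0 ^ (1 - s) = ⊤ := by
      rw [hM0top, ENNReal.top_rpow_of_pos (by linarith : (0:ℝ) < 1 - s), ENNReal.mul_top]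
      rw [Ne, mul_eq_zero]
      push_neg
      refine ⟨hofC, ?_⟩
      rw [Ne, ENNReal.rpow_eq_zero_iff]
      push_neg
      exact ⟨fun h => absurd h hMq0, fun h => absurd h hMqtop⟩
    rw [this]; exact le_top
  -- main case
  set a : ℝ := M0.toReal with hadef
  set b : ℝ := Mq.toReal with hbdef
  have ha : 0 < a := ENNReal.toReal_pos hM00 hM0top
  have hb : 0 < b := ENNReal.toReal_pos hMq0 hMqtop
  have hA' : M0 = ENNReal.ofReal a := (ENNReal.ofReal_toReal hM0top).symm
  have hB' : Mq = ENNReal.ofReal b := (ENNReal.ofReal_toReal hMqtop).symm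
  set δ : ℝ := (b / a) ^ s with hδdef
  have hδ : 0 < δ := Real.rpow_pos_of_pos (div_pos hb ha) s
  set m : ℝ := b ^ s * a ^ (1 - s) with hmdef
  have hm0 : 0 < m := mul_pos (Real.rpow_pos_of_pos hb s) (Real.rpow_pos_of_pos ha _)
  have has : (0:ℝ) < a ^ s := Real.rpow_pos_of_pos ha s
  have hbs : (0:ℝ) < b ^ s := Real.rpow_pos_of_pos hb s
  have hm1 : δ * a = m := by
    rw [hδdef, hmdef, Real.div_rpow hb.le ha.le, Real.rpow_sub ha, Real.rpow_one]
    field_simp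
  have hm2 : δ ^ (1 - q) * b = m := by
    have h2 : δ ^ (1 - q) * b = δ * a := by
      rw [hδdef, ← Real.rpow_mul (by positivity), show s * (1 - q) = s - 1 by
        rw [mul_sub, mul_one, hsq], Real.rpow_sub (div_pos hb ha), Real.rpow_one]
      field_simp
    rw [h2, hm1]
  -- the two maximal-function bounds
  have main_le : ∀ (e : ℝ) (M : ℝ≥0∞),
      (∀ r : ℝ, 0 < r → ENNReal.ofReal (r ^ (e - (n:ℝ))) * (∫⁻ z in ball x r, g z) ≤ M) →
      ∀ r : ℝ, 0 < r → ∫⁻ z in ball x r, g z ≤ ENNReal.ofReal (r ^ ((n:ℝ) - e)) * M := by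
    intro e M hM r hr
    have key : ENNReal.ofReal (r ^ ((n:ℝ) - e)) * ENNReal.ofReal (r ^ (e - (n:ℝ))) = 1 := by
      rw [← ENNReal.ofReal_mul (by positivity), ← Real.rpow_add hr,
        show ((n:ℝ) - e) + (e - (n:ℝ)) = 0 by ring, Real.rpow_zero, ENNReal.ofReal_one]
    calc ∫⁻ z in ball x r, g z
        = ENNReal.ofReal (r ^ ((n:ℝ) - e)) * ENNReal.ofReal (r ^ (e - (n:ℝ))) *
            ∫⁻ z in ball x r, g z := by rw [key, one_mul]
      _ = ENNReal.ofReal (r ^ ((n:ℝ) - e)) * (ENNReal.ofReal (r ^ (e - (n:ℝ))) *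
            ∫⁻ z in ball x r, g z) := by ring
      _ ≤ ENNReal.ofReal (r ^ ((n:ℝ) - e)) * M := mul_le_mul_right (hM r hr) _
  have hA : ∀ r : ℝ, 0 < r → ∫⁻ z in ball x r, g z ≤ ENNReal.ofReal (r ^ (n:ℝ)) * M0 := by
    intro r hr
    have := main_le 0 M0 (fun r' hr' => le_iSup₂ (f := fun (r : ℝ) (_ : 0 < r) =>
      ENNReal.ofReal (r ^ ((0:ℝ) - (n:ℝ))) * ∫⁻ z in ball x r, g z) r' hr') r hr
    simpa using this
  have hB : ∀ r : ℝ, 0 < r → ∫⁻ z in ball x r, g z ≤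
      ENNReal.ofReal (r ^ ((n:ℝ) - q)) * Mq := by
    intro r hr
    exact main_le q Mq (fun r' hr' => le_iSup₂ (f := fun (r : ℝ) (_ : 0 < r) =>
      ENNReal.ofReal (r ^ (q - (n:ℝ))) * ∫⁻ z in ball x r, g z) r' hr') r hr
  -- put everything together
  have t1 : ENNReal.ofReal ((2:ℝ) ^ (2 * (n:ℝ)) * δ) * 2 * M0 =
      ENNReal.ofReal ((2:ℝ) ^ (2 * (n:ℝ))) * 2 * ENNReal.ofReal m := by
    rw [hA']
    calc ENNReal.ofReal ((2:ℝ) ^ (2 * (n:ℝ)) * δ) * 2 * ENNReal.ofReal a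
        = ENNReal.ofReal ((2:ℝ) ^ (2 * (n:ℝ)) * δ * a) * 2 := by
          rw [ENNReal.ofReal_mul (mul_nonneg (by positivity) hδ.le)]
          ring
      _ = ENNReal.ofReal ((2:ℝ) ^ (2 * (n:ℝ)) * m) * 2 := by rw [mul_assoc, hm1]
      _ = ENNReal.ofReal ((2:ℝ) ^ (2 * (n:ℝ))) * 2 * ENNReal.ofReal m := by
          rw [ENNReal.ofReal_mul (by positivity : (0:ℝ) ≤ (2:ℝ) ^ (2 * (n:ℝ)))]
          ring
  have t2 : ENNReal.ofReal ((2:ℝ) ^ (n:ℝ) * δ ^ (1 - q)) * Kq * Mq =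
      ENNReal.ofReal ((2:ℝ) ^ (n:ℝ)) * Kq * ENNReal.ofReal m := by
    rw [hB']
    calc ENNReal.ofReal ((2:ℝ) ^ (n:ℝ) * δ ^ (1 - q)) * Kq * ENNReal.ofReal b
        = ENNReal.ofReal ((2:ℝ) ^ (n:ℝ) * δ ^ (1 - q) * b) * Kq := by
          rw [ENNReal.ofReal_mul
            (mul_nonneg (by positivity) (Real.rpow_nonneg hδ.le _))]
          ring
      _ = ENNReal.ofReal ((2:ℝ) ^ (n:ℝ) * m) * Kq := by rw [mul_assoc, hm2]
      _ = ENNReal.ofReal ((2:ℝ) ^ (n:ℝ)) * Kq * ENNReal.ofReal m := by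
          rw [ENNReal.ofReal_mul (by positivity : (0:ℝ) ≤ (2:ℝ) ^ (n:ℝ))]
          ring
  calc (∫⁻ y, ENNReal.ofReal (f y * ‖y - x‖ ^ (1 - (n:ℝ))))
      = ∫⁻ y, g y * ENNReal.ofReal (‖y - x‖ ^ (1 - (n:ℝ))) := hLHS
    _ = (∫⁻ y in ball x δ, g y * ENNReal.ofReal (‖y - x‖ ^ (1 - (n:ℝ)))) +
        ∫⁻ y in (ball x δ)ᶜ, g y * ENNReal.ofReal (‖y - x‖ ^ (1 - (n:ℝ))) :=
        (lintegral_add_compl _ measurableSet_ball).symm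
    _ ≤ ENNReal.ofReal ((2:ℝ) ^ (2 * (n:ℝ)) * δ) * 2 * M0 +
        ENNReal.ofReal ((2:ℝ) ^ (n:ℝ) * δ ^ (1 - q)) * Kq * Mq :=
        add_le_add (near_bound hn x g hg M0 hA hδ) (far_bound hn hq1 hqn x g hg Mq hB hδ)
    _ = K * ENNReal.ofReal m := by rw [t1, t2, hK, add_mul]
    _ = ENNReal.ofReal K.toReal * Mq ^ s * M0 ^ (1 - s) := by
        rw [hCK, hA', hB', ENNReal.ofReal_rpow_of_pos hb, ENNReal.ofReal_rpow_of_pos ha,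
          hmdef, ENNReal.ofReal_mul hbs.le]
        ring
end

section
/- Let n ≥ 2, β > 0 with β := αp + p and suppose λ − β > 0 where n−1 < λ < n. For 0 < a < 1/2, ∫_{−a}^{a} ∫_0^{1/2} (z₁² + z₂²)^{(λ−n−β)/2} z₂^{n−2} dz₂ dz₁ ≤ C (a^{λ−β} + a(1 + |log a|)), where C depends only on n, λ, β. -/
open MeasureTheory Set Real

lemma auxStmt18_log_integrable {a : ℝ} (ha : 0 < a) (ha1 : a ≤ 1) :
    IntegrableOn Real.log (Ioc 0 a) := by
  have hg : IntegrableOn (fun x : ℝ => 2 * x ^ (-(1/2) : ℝ)) (Ioc 0 a) := by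
    have := (intervalIntegral.intervalIntegrable_rpow' (a := 0) (b := a)
      (r := (-(1/2) : ℝ)) (by norm_num)).const_mul 2
    rwa [intervalIntegrable_iff_integrableOn_Ioc_of_le ha.le] at this
  refine MeasureTheory.Integrable.mono hg Real.measurable_log.aestronglyMeasurable ?_
  rw [ae_restrict_iff' measurableSet_Ioc]
  refine Filter.Eventually.of_forall (fun x hx => ?_)
  have hx0 : 0 < x := hx.1
  have hlognp : Real.log x ≤ 0 := Real.log_nonpos hx0.le (hx.2.trans ha1)
  have hrpow : 0 < x ^ (-(1/2) : ℝ) := Real.rpow_pos_of_pos hx0 _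
  rw [Real.norm_eq_abs, Real.norm_eq_abs, abs_of_nonpos hlognp,
    abs_of_nonneg (by positivity)]
  have h1 : Real.log (x ^ (-(1/2) : ℝ)) = -(1/2) * Real.log x := Real.log_rpow hx0 _
  have h2 : Real.log (x ^ (-(1/2) : ℝ)) ≤ x ^ (-(1/2) : ℝ) - 1 :=
    Real.log_le_sub_one_of_pos hrpow
  nlinarith

lemma auxStmt18_log_integral {a : ℝ} (ha : 0 < a) (ha1 : a ≤ 1) :
    ∫ x in Ioc 0 a, Real.log x = a * Real.log a - a := by
  set s : ℕ → Set ℝ := fun n => Ioc (a / (n + 1)) a with hs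
  have hsm : ∀ n, MeasurableSet (s n) := fun n => measurableSet_Ioc
  have hmono : Monotone s := by
    intro m n hmn
    apply Ioc_subset_Ioc_left
    apply div_le_div_of_nonneg_left ha.le (by positivity)
    exact_mod_cast by exact_mod_cast add_le_add_left (Nat.cast_le.mpr hmn) 1
  have hunion : (⋃ n, s n) = Ioc 0 a := by
    ext x
    simp only [mem_iUnion, mem_Ioc, hs]
    constructor
    · rintro ⟨n, h1, h2⟩
      exact ⟨lt_trans (by positivity) h1, h2⟩
    · rintro ⟨h1, h2⟩
      obtain ⟨n, hn⟩ := exists_nat_gt (a / x)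
      refine ⟨n, ?_, h2⟩
      rw [div_lt_iff₀ (by positivity)]
      have : a / x < n + 1 := hn.trans (by linarith)
      rw [div_lt_iff₀ h1] at this
      linarith [mul_comm x ((n : ℝ) + 1)]
  have hint : IntegrableOn Real.log (⋃ n, s n) := by
    rw [hunion]; exact auxStmt18_log_integrable ha ha1
  have h := tendsto_setIntegral_of_monotone hsm hmono hint
  rw [hunion] at h
  have hval : ∀ n : ℕ, ∫ x in s n, Real.log x
      = a * Real.log a - (a / (n+1)) * Real.log (a / (n+1)) - a + a / (n+1) := by
    intro n
    have hc : 0 < a / ((n : ℝ) + 1) := by positivity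
    have hca : a / ((n : ℝ) + 1) ≤ a := by
      rw [div_le_iff₀ (by positivity)]; nlinarith
    rw [← intervalIntegral.integral_of_le hca]
    rw [integral_log]
  have h2 : Filter.Tendsto (fun n : ℕ =>
      a * Real.log a - (a / (n+1)) * Real.log (a / (n+1)) - a + a / (n+1))
      Filter.atTop (nhds (a * Real.log a - 0 - a + 0)) := by
    have hc : Filter.Tendsto (fun n : ℕ => a / ((n : ℝ)+1)) Filter.atTop (nhds 0) := by
      have h1 : Filter.Tendsto (fun n : ℕ => 1 / ((n : ℝ) + 1)) Filter.atTop (nhds 0) :=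
        tendsto_one_div_add_atTop_nhds_zero_nat
      have := h1.const_mul a
      simpa [div_eq_mul_inv, mul_comm, one_div] using this
    have hclog : Filter.Tendsto (fun n : ℕ => (a / ((n : ℝ)+1)) * Real.log (a / ((n : ℝ)+1)))
        Filter.atTop (nhds 0) := by
      have := (Real.continuous_mul_log.tendsto 0).comp hc
      simpa [Function.comp_def] using this
    exact ((tendsto_const_nhds.sub hclog).sub tendsto_const_nhds).add hc
  have h3 := tendsto_nhds_unique (by simpa only [hval] using h) (by simpa using h2)
  linarith [h3]

lemma auxStmt18_inner (n : ℕ) (hn : 2 ≤ n) (lam β : ℝ)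
    (hβ : 0 < β) (hlβ : 0 < lam - β) (hl2 : lam < n) :
    ∃ K : ℝ, 0 < K ∧ ∀ t : ℝ, 0 < t → t < 1/2 →
      ∫⁻ z in Ioo (0:ℝ) (1/2),
          ENNReal.ofReal ((t ^ 2 + z ^ 2) ^ ((lam - n - β) / 2) * z ^ ((n : ℝ) - 2))
        ≤ ENNReal.ofReal (K * (t ^ (lam - β - 1) + 1 + |Real.log t|)) := by
  have hn2 : (2:ℝ) ≤ (n:ℝ) := by exact_mod_cast hn
  have hnr : (0:ℝ) < (n:ℝ) - 1 := by linarith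
  have he : (lam - (n:ℝ) - β) / 2 ≤ 0 := by linarith
  -- one-dimensional tail estimate
  obtain ⟨K₁, hK₁pos, hK₁⟩ : ∃ K₁ : ℝ, 0 < K₁ ∧ ∀ t : ℝ, 0 < t → t < 1/2 →
      ∫ z in t..(1/2:ℝ), z ^ (lam - β - 2) ≤ K₁ * (t ^ (lam - β - 1) + 1 + |Real.log t|) := by
    rcases lt_trichotomy (lam - β) 1 with hc | hc | hc
    · have hd : (0:ℝ) < 1 - (lam - β) := by linarith
      refine ⟨1/(1 - (lam - β)), by positivity, fun t ht ht2 => ?_⟩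
      have h0 : (0:ℝ) ∉ Set.uIcc t (1/2:ℝ) := notMem_uIcc_of_lt ht (by norm_num)
      rw [integral_rpow (Or.inr ⟨by intro h; linarith, h0⟩)]
      have e1 : lam - β - 2 + 1 = lam - β - 1 := by ring
      rw [e1]
      set A := ((1:ℝ)/2) ^ (lam - β - 1) with hA
      set B := t ^ (lam - β - 1) with hB
      have hA0 : 0 ≤ A := Real.rpow_nonneg (by norm_num) _
      have hB0 : 0 ≤ B := Real.rpow_nonneg ht.le _
      have hL0 : 0 ≤ |Real.log t| := abs_nonneg _
      have hd1 : lam - β - 1 ≠ 0 := by intro h; linarith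
      have h1 : (A - B)/(lam - β - 1) = (B - A) * (1/(1 - (lam - β))) := by
        field_simp
        ring
      rw [h1]
      have hpos : (0:ℝ) < 1/(1 - (lam - β)) := by positivity
      nlinarith [mul_le_mul_of_nonneg_right
        (show B - A ≤ B + 1 + |Real.log t| by linarith) hpos.le]
    · refine ⟨1, one_pos, fun t ht ht2 => ?_⟩
      have h0 : (0:ℝ) ∉ Set.uIcc t (1/2:ℝ) := notMem_uIcc_of_lt ht (by norm_num)
      have e1 : lam - β - 2 = -1 := by linarith
      rw [e1]
      have : ∀ z : ℝ, z ^ (-1:ℝ) = z⁻¹ := fun z => Real.rpow_neg_one z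
      simp_rw [this]
      rw [integral_inv h0, Real.log_div (by norm_num) (ne_of_gt ht)]
      have hlt : Real.log t < 0 := Real.log_neg ht (by linarith)
      have hl2' : Real.log (1/2 : ℝ) < 0 := Real.log_neg (by norm_num) (by norm_num)
      have hB0 : 0 ≤ t ^ (lam - β - 1) := Real.rpow_nonneg ht.le _
      rw [abs_of_neg hlt]
      linarith
    · have hd : (0:ℝ) < lam - β - 1 := by linarith
      refine ⟨1/(lam - β - 1), by positivity, fun t ht ht2 => ?_⟩
      have h0 : (0:ℝ) ∉ Set.uIcc t (1/2:ℝ) := notMem_uIcc_of_lt ht (by norm_num)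
      rw [integral_rpow (Or.inr ⟨by intro h; linarith, h0⟩)]
      have e1 : lam - β - 2 + 1 = lam - β - 1 := by ring
      rw [e1]
      set A := ((1:ℝ)/2) ^ (lam - β - 1) with hA
      set B := t ^ (lam - β - 1) with hB
      have hA1 : A ≤ 1 := Real.rpow_le_one (by norm_num) (by norm_num) (by linarith)
      have hB0 : 0 ≤ B := Real.rpow_nonneg ht.le _
      have hL0 : 0 ≤ |Real.log t| := abs_nonneg _
      rw [one_div, inv_mul_eq_div, div_le_div_iff₀ (by linarith) (by linarith)]
      nlinarith
  refine ⟨K₁ + 1/((n:ℝ) - 1), by positivity, fun t ht ht2 => ?_⟩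
  have ht1 : t < 1 := by linarith
  -- Part A : over Ioc 0 t
  have hA : ∫⁻ z in Ioc (0:ℝ) t,
      ENNReal.ofReal ((t ^ 2 + z ^ 2) ^ ((lam - n - β) / 2) * z ^ ((n : ℝ) - 2))
      ≤ ENNReal.ofReal (t ^ (lam - β - 1) / ((n:ℝ) - 1)) := by
    have step1 : ∫⁻ z in Ioc (0:ℝ) t,
        ENNReal.ofReal ((t ^ 2 + z ^ 2) ^ ((lam - n - β) / 2) * z ^ ((n : ℝ) - 2))
        ≤ ∫⁻ z in Ioc (0:ℝ) t,
        ENNReal.ofReal (t ^ (lam - (n:ℝ) - β) * z ^ ((n : ℝ) - 2)) := by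
      refine setLIntegral_mono' measurableSet_Ioc (fun z hz => ?_)
      refine ENNReal.ofReal_le_ofReal ?_
      refine mul_le_mul_of_nonneg_right ?_ (Real.rpow_nonneg hz.1.le _)
      have h1 : (t^2 : ℝ) ^ ((lam - (n:ℝ) - β)/2) = t ^ (lam - (n:ℝ) - β) := by
        rw [← Real.rpow_natCast t 2, ← Real.rpow_mul ht.le]
        congr 1
        push_cast
        ring
      rw [← h1]
      exact Real.rpow_le_rpow_of_nonpos (by positivity) (by nlinarith [sq_nonneg z]) he
    refine step1.trans ?_
    have hint : IntegrableOn (fun z : ℝ => t ^ (lam - (n:ℝ) - β) * z ^ ((n:ℝ) - 2)) (Ioc 0 t) := by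
      have := (intervalIntegral.intervalIntegrable_rpow' (a := 0) (b := t)
        (r := (n:ℝ) - 2) (by linarith)).const_mul (t ^ (lam - (n:ℝ) - β))
      rwa [intervalIntegrable_iff_integrableOn_Ioc_of_le ht.le] at this
    have hnn : 0 ≤ᵐ[volume.restrict (Ioc (0:ℝ) t)]
        fun z : ℝ => t ^ (lam - (n:ℝ) - β) * z ^ ((n:ℝ) - 2) := by
      filter_upwards [ae_restrict_mem measurableSet_Ioc] with z hz
      simp only [Pi.zero_apply]
      have h1 := Real.rpow_nonneg hz.1.le ((n:ℝ) - 2)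
      have h2 := Real.rpow_nonneg ht.le (lam - (n:ℝ) - β)
      positivity
    rw [← MeasureTheory.ofReal_integral_eq_lintegral_ofReal hint hnn]
    refine ENNReal.ofReal_le_ofReal ?_
    rw [← intervalIntegral.integral_of_le ht.le, intervalIntegral.integral_const_mul,
      integral_rpow (Or.inl (by linarith))]
    rw [Real.zero_rpow (by linarith : (0:ℝ) < (n:ℝ) - 2 + 1).ne']
    have e2 : (n:ℝ) - 2 + 1 = (n:ℝ) - 1 := by ring
    rw [e2, sub_zero]
    rw [div_eq_mul_inv, ← mul_assoc, ← Real.rpow_add ht]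
    have e3 : lam - (n:ℝ) - β + ((n:ℝ) - 1) = lam - β - 1 := by ring
    rw [e3, ← div_eq_mul_inv]
  -- Part B : over Ioc t (1/2)
  have hB : ∫⁻ z in Ioc t (1/2:ℝ),
      ENNReal.ofReal ((t ^ 2 + z ^ 2) ^ ((lam - n - β) / 2) * z ^ ((n : ℝ) - 2))
      ≤ ENNReal.ofReal (K₁ * (t ^ (lam - β - 1) + 1 + |Real.log t|)) := by
    have step1 : ∫⁻ z in Ioc t (1/2:ℝ),
        ENNReal.ofReal ((t ^ 2 + z ^ 2) ^ ((lam - n - β) / 2) * z ^ ((n : ℝ) - 2))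
        ≤ ∫⁻ z in Ioc t (1/2:ℝ), ENNReal.ofReal (z ^ (lam - β - 2)) := by
      refine setLIntegral_mono' measurableSet_Ioc (fun z hz => ?_)
      refine ENNReal.ofReal_le_ofReal ?_
      have hz0 : 0 < z := lt_trans ht hz.1
      have h1 : (z^2 : ℝ) ^ ((lam - (n:ℝ) - β)/2) = z ^ (lam - (n:ℝ) - β) := by
        rw [← Real.rpow_natCast z 2, ← Real.rpow_mul hz0.le]
        congr 1
        push_cast
        ring
      have h2 : (t ^ 2 + z ^ 2 : ℝ) ^ ((lam - (n:ℝ) - β)/2) ≤ z ^ (lam - (n:ℝ) - β) := by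
        rw [← h1]
        exact Real.rpow_le_rpow_of_nonpos (by positivity) (by nlinarith [sq_nonneg t]) he
      calc (t ^ 2 + z ^ 2 : ℝ) ^ ((lam - (n:ℝ) - β)/2) * z ^ ((n:ℝ) - 2)
          ≤ z ^ (lam - (n:ℝ) - β) * z ^ ((n:ℝ) - 2) :=
            mul_le_mul_of_nonneg_right h2 (Real.rpow_nonneg hz0.le _)
        _ = z ^ (lam - β - 2) := by
            rw [← Real.rpow_add hz0]
            ring_nf
    refine step1.trans ?_
    have hint : IntegrableOn (fun z : ℝ => z ^ (lam - β - 2)) (Ioc t (1/2:ℝ)) := by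
      have := intervalIntegral.intervalIntegrable_rpow (μ := volume) (a := t) (b := 1/2)
        (r := lam - β - 2) (Or.inr (notMem_uIcc_of_lt ht (by norm_num)))
      rwa [intervalIntegrable_iff_integrableOn_Ioc_of_le ht2.le] at this
    have hnn : 0 ≤ᵐ[volume.restrict (Ioc t (1/2:ℝ))] fun z : ℝ => z ^ (lam - β - 2) := by
      filter_upwards [ae_restrict_mem measurableSet_Ioc] with z hz
      simp only [Pi.zero_apply]
      exact Real.rpow_nonneg (lt_trans ht hz.1).le _
    rw [← MeasureTheory.ofReal_integral_eq_lintegral_ofReal hint hnn]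
    refine ENNReal.ofReal_le_ofReal ?_
    rw [← intervalIntegral.integral_of_le ht2.le]
    exact hK₁ t ht ht2
  -- combine
  calc ∫⁻ z in Ioo (0:ℝ) (1/2),
        ENNReal.ofReal ((t ^ 2 + z ^ 2) ^ ((lam - n - β) / 2) * z ^ ((n : ℝ) - 2))
      ≤ ∫⁻ z in Ioc (0:ℝ) t ∪ Ioc t (1/2:ℝ),
        ENNReal.ofReal ((t ^ 2 + z ^ 2) ^ ((lam - n - β) / 2) * z ^ ((n : ℝ) - 2)) := by
        refine lintegral_mono_set ?_
        rw [Ioc_union_Ioc_eq_Ioc ht.le ht2.le]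
        exact Ioo_subset_Ioc_self
    _ ≤ (∫⁻ z in Ioc (0:ℝ) t,
          ENNReal.ofReal ((t ^ 2 + z ^ 2) ^ ((lam - n - β) / 2) * z ^ ((n : ℝ) - 2)))
        + ∫⁻ z in Ioc t (1/2:ℝ),
          ENNReal.ofReal ((t ^ 2 + z ^ 2) ^ ((lam - n - β) / 2) * z ^ ((n : ℝ) - 2)) :=
        lintegral_union_le _ _ _
    _ ≤ ENNReal.ofReal (t ^ (lam - β - 1) / ((n:ℝ) - 1))
        + ENNReal.ofReal (K₁ * (t ^ (lam - β - 1) + 1 + |Real.log t|)) := add_le_add hA hB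
    _ = ENNReal.ofReal (t ^ (lam - β - 1) / ((n:ℝ) - 1)
        + K₁ * (t ^ (lam - β - 1) + 1 + |Real.log t|)) := by
        rw [← ENNReal.ofReal_add]
        · positivity
        · have := Real.rpow_nonneg ht.le (lam - β - 1)
          have := abs_nonneg (Real.log t)
          positivity
    _ ≤ ENNReal.ofReal ((K₁ + 1/((n:ℝ) - 1)) * (t ^ (lam - β - 1) + 1 + |Real.log t|)) := by
        refine ENNReal.ofReal_le_ofReal ?_
        have hB0 : 0 ≤ t ^ (lam - β - 1) := Real.rpow_nonneg ht.le _
        have hL0 : 0 ≤ |Real.log t| := abs_nonneg _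
        have hu0 : (0:ℝ) < 1/((n:ℝ)-1) := by positivity
        rw [div_eq_mul_one_div]
        nlinarith [mul_nonneg hu0.le (by linarith : (0:ℝ) ≤ 1 + |Real.log t|)]
/-- Key two-dimensional iterated-integral estimate: for `n ≥ 2`, `n-1 < λ < n`, `β > 0` with
`λ - β > 0`, there is `C = C(n,λ,β)` such that for all `0 < a < 1/2`,
`∫_{-a}^{a} ∫_0^{1/2} (z₁² + z₂²)^{(λ-n-β)/2} z₂^{n-2} dz₂ dz₁
  ≤ C (a^{λ-β} + a(1 + |log a|))`. -/
theorem stmt18 (n : ℕ) (hn : 2 ≤ n) (lam β : ℝ)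
    (hβ : 0 < β) (hlβ : 0 < lam - β) (hl1 : (n : ℝ) - 1 < lam) (hl2 : lam < n) :
    ∃ C : ℝ, 0 < C ∧
      ∀ a : ℝ, 0 < a → a < 1 / 2 →
        ∫⁻ z₁ in Ioo (-a) a, ∫⁻ z₂ in Ioo (0 : ℝ) (1 / 2),
            ENNReal.ofReal ((z₁ ^ 2 + z₂ ^ 2) ^ ((lam - n - β) / 2) * z₂ ^ ((n : ℝ) - 2))
          ≤ ENNReal.ofReal (C * (a ^ (lam - β) + a * (1 + |Real.log a|))) := by
  obtain ⟨K, hKpos, hK⟩ := auxStmt18_inner n hn lam β hβ hlβ hl2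
  have hCpos : 0 < K * (2/(lam - β) + 4) := by positivity
  refine ⟨K * (2/(lam - β) + 4), hCpos, fun a ha ha2 => ?_⟩
  set E : ℝ → ℝ := fun x => |x| ^ (lam - β - 1) + 1 + |Real.log (|x|)| with hE
  have hE0 : ∀ x, 0 ≤ E x := fun x => by
    have h1 := Real.rpow_nonneg (abs_nonneg x) (lam - β - 1)
    have h2 := abs_nonneg (Real.log (|x|))
    positivity
  have hEneg : (fun x : ℝ => E (-x)) = E := by
    funext x; simp [hE, abs_neg]
  -- Step 1 : pointwise (a.e.) bound of the inner integral
  have step1 : (∫⁻ z₁ in Ioo (-a) a, ∫⁻ z₂ in Ioo (0 : ℝ) (1 / 2),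
        ENNReal.ofReal ((z₁ ^ 2 + z₂ ^ 2) ^ ((lam - n - β) / 2) * z₂ ^ ((n : ℝ) - 2)))
      ≤ ∫⁻ x in Ioo (-a) a, ENNReal.ofReal (K * E x) := by
    refine lintegral_mono_ae ?_
    have h0 : ∀ᵐ x : ℝ ∂(volume.restrict (Ioo (-a) a)), x ≠ 0 := by
      refine ae_restrict_of_ae ?_
      rw [ae_iff]
      have hset : {x : ℝ | ¬ x ≠ 0} = {(0:ℝ)} := by ext x; simp
      rw [hset]
      exact measure_singleton 0
    filter_upwards [h0, ae_restrict_mem measurableSet_Ioo] with x hx hmem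
    have hx0 : 0 < |x| := abs_pos.mpr hx
    have hxa : |x| < 1/2 := lt_trans (abs_lt.mpr ⟨hmem.1, hmem.2⟩) ha2
    have hbd := hK |x| hx0 hxa
    rw [← sq_abs x]
    exact hbd
  -- integrability of E
  have hIx : IntegrableOn (fun x : ℝ => x ^ (lam - β - 1) + 1 + |Real.log x|) (Ioc 0 a) := by
    have h1 : IntegrableOn (fun x : ℝ => x ^ (lam - β - 1)) (Ioc 0 a) := by
      have := intervalIntegral.intervalIntegrable_rpow' (a := 0) (b := a)
        (r := lam - β - 1) (by linarith)
      rwa [intervalIntegrable_iff_integrableOn_Ioc_of_le ha.le] at this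
    have h2 : IntegrableOn (fun x : ℝ => |Real.log x|) (Ioc 0 a) :=
      (auxStmt18_log_integrable ha (by linarith)).abs
    exact (h1.add (integrableOn_const measure_Ioc_lt_top.ne)).add h2
  have hIE : IntegrableOn E (Ioc 0 a) := by
    refine hIx.congr_fun (fun x hx => ?_) measurableSet_Ioc
    simp [hE, abs_of_nonneg hx.1.le]
  have hIiE : IntervalIntegrable E volume 0 a := by
    rw [intervalIntegrable_iff_integrableOn_Ioc_of_le ha.le]; exact hIE
  have hIiE2 : IntervalIntegrable E volume (-a) 0 := by
    have h := (IntervalIntegrable.iff_comp_neg (f := E) (a := 0) (b := a)).mp hIiE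
    rw [hEneg] at h
    simpa using h.symm
  have hIEoo : IntegrableOn E (Ioo (-a) a) := by
    have h1 : IntegrableOn E (Ioc (-a) 0) := by
      have := hIiE2
      rwa [intervalIntegrable_iff_integrableOn_Ioc_of_le (by linarith)] at this
    have h2 := h1.union hIE
    refine h2.mono_set ?_
    rw [Ioc_union_Ioc_eq_Ioc (by linarith : -a ≤ 0) ha.le]
    exact Ioo_subset_Ioc_self
  -- Step 2 : convert to a Bochner integral
  have step2 : ∫⁻ x in Ioo (-a) a, ENNReal.ofReal (K * E x)
      = ENNReal.ofReal (∫ x in Ioo (-a) a, K * E x) := by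
    rw [MeasureTheory.ofReal_integral_eq_lintegral_ofReal (hIEoo.const_mul K)
      (Filter.Eventually.of_forall (fun x => mul_nonneg hKpos.le (hE0 x)))]
  -- Step 3 : compute the integral of E
  have hval0a : ∫ x in (0:ℝ)..a, E x
      = a ^ (lam - β)/(lam - β) + a + (a - a * Real.log a) := by
    have hEq : EqOn E (fun x : ℝ => x ^ (lam - β - 1) + 1 + |Real.log x|) (uIcc 0 a) := by
      intro x hx
      rw [uIcc_of_le ha.le] at hx
      simp [hE, abs_of_nonneg hx.1]
    rw [intervalIntegral.integral_congr hEq]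
    have hf1 : IntervalIntegrable (fun x : ℝ => x ^ (lam - β - 1)) volume 0 a :=
      intervalIntegral.intervalIntegrable_rpow' (by linarith)
    have hf2 : IntervalIntegrable (fun _ : ℝ => (1:ℝ)) volume 0 a :=
      intervalIntegrable_const
    have hf3 : IntervalIntegrable (fun x : ℝ => |Real.log x|) volume 0 a := by
      rw [intervalIntegrable_iff_integrableOn_Ioc_of_le ha.le]
      exact (auxStmt18_log_integrable ha (by linarith)).abs
    rw [intervalIntegral.integral_add (hf1.add hf2) hf3,
      intervalIntegral.integral_add hf1 hf2]
    have e1 : ∫ x in (0:ℝ)..a, x ^ (lam - β - 1) = a ^ (lam - β)/(lam - β) := by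
      rw [integral_rpow (Or.inl (by linarith))]
      rw [show lam - β - 1 + 1 = lam - β by ring, Real.zero_rpow hlβ.ne', sub_zero]
    have e2 : ∫ _ in (0:ℝ)..a, (1:ℝ) = a := by simp
    have e3 : ∫ x in (0:ℝ)..a, |Real.log x| = a - a * Real.log a := by
      rw [intervalIntegral.integral_of_le ha.le]
      have : ∫ x in Ioc (0:ℝ) a, |Real.log x| = ∫ x in Ioc (0:ℝ) a, -Real.log x := by
        refine setIntegral_congr_fun measurableSet_Ioc (fun x hx => ?_)
        exact abs_of_nonpos (Real.log_nonpos hx.1.le (le_trans hx.2 (by linarith)))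
      rw [this, integral_neg, auxStmt18_log_integral ha (by linarith)]
      ring
    rw [e1, e2, e3]
  have hval : ∫ x in Ioo (-a) a, E x
      = 2 * (a ^ (lam - β)/(lam - β) + a + (a - a * Real.log a)) := by
    rw [← integral_Ioc_eq_integral_Ioo,
      ← intervalIntegral.integral_of_le (by linarith : -a ≤ a),
      ← intervalIntegral.integral_add_adjacent_intervals hIiE2 hIiE]
    have hneg : ∫ x in (-a)..(0:ℝ), E x = ∫ x in (0:ℝ)..a, E x := by
      have h := intervalIntegral.integral_comp_neg (a := (0:ℝ)) (b := a) (f := E)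
      rw [hEneg, neg_zero] at h
      exact h.symm
    rw [hneg, hval0a]
    ring
  -- final chain
  calc (∫⁻ z₁ in Ioo (-a) a, ∫⁻ z₂ in Ioo (0 : ℝ) (1 / 2),
        ENNReal.ofReal ((z₁ ^ 2 + z₂ ^ 2) ^ ((lam - n - β) / 2) * z₂ ^ ((n : ℝ) - 2)))
      ≤ ∫⁻ x in Ioo (-a) a, ENNReal.ofReal (K * E x) := step1
    _ = ENNReal.ofReal (∫ x in Ioo (-a) a, K * E x) := step2
    _ ≤ ENNReal.ofReal (K * (2/(lam - β) + 4) * (a ^ (lam - β) + a * (1 + |Real.log a|))) := by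
        refine ENNReal.ofReal_le_ofReal ?_
        rw [MeasureTheory.integral_const_mul, hval]
        have hla : Real.log a < 0 := Real.log_neg ha (by linarith)
        rw [abs_of_neg hla, mul_assoc]
        refine mul_le_mul_of_nonneg_left ?_ hKpos.le
        have hA0 : 0 ≤ a ^ (lam - β) := Real.rpow_nonneg ha.le _
        have hL : 0 ≤ -Real.log a := by linarith
        have hinv : 0 ≤ (lam - β)⁻¹ := inv_nonneg.mpr hlβ.le
        have key : (2 / (lam - β) + 4) * (a ^ (lam - β) + a * (1 + -Real.log a))
            - 2 * (a ^ (lam - β) / (lam - β) + a + (a - a * Real.log a))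
            = 2*(a*(lam - β)⁻¹) + 2*((a * -Real.log a)*(lam - β)⁻¹)
              + 4*(a^(lam - β)) + 2*(a * -Real.log a) := by ring
        linarith [mul_nonneg ha.le hL, mul_nonneg (mul_nonneg ha.le hL) hinv,
          mul_nonneg ha.le hinv, hA0, key]
end
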